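/- arXiv:1510.06574 — 7 statements merged into one kernel-verified Lean document; each statement's English description precedes it below -/
import Mathlib

section
/- For every fixed real p with 0 < p < 1 there is a constant C > 0 such that asymptotically almost surely the random graph G(n,p) has the following property: for every vertex set S with |S| ≤ C · log log n and every subset A ⊆ S, there exists a vertex v ∉ S such that N(v) ∩ S = A. -/
open MeasureTheory Filter

/-- The Erdős–Rényi measure `G(n,p)`: each potential edge (element of `Sym2 (Fin n)`)
is present independently with probability `p`. -/
noncomputable def gnp (n : ℕ) (p : ℝ) (hp : p ≤ 1) : Measure (Sym2 (Fin n) → Bool) :=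
  Measure.pi fun _ => (PMF.bernoulli (Real.toNNReal p) (Real.toNNReal_le_one.mpr hp)).toMeasure

/-- The simple graph determined by an edge-indicator function. -/
def graphOf {n : ℕ} (ω : Sym2 (Fin n) → Bool) : SimpleGraph (Fin n) where
  Adj x y := x ≠ y ∧ ω s(x, y) = true
  symm := ⟨fun x y => by
    rintro ⟨h1, h2⟩
    exact ⟨h1.symm, by rwa [Sym2.eq_swap]⟩⟩
  loopless := ⟨fun x => by simp⟩

instance {n : ℕ} (ω : Sym2 (Fin n) → Bool) : DecidableRel (graphOf ω).Adj :=
  fun x y => inferInstanceAs (Decidable (x ≠ y ∧ ω s(x, y) = true))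

/-!
Fix `S` with `|S| = s` and `A ⊆ S`, and put `q = min p (1 - p)`. For `v ∉ S` the event
`N(v) ∩ S = A` only involves the edges from `v` to `S`, and has probability at least `q ^ s`.
These edge sets are disjoint for distinct `v`, so the probability that no vertex outside `S`
realizes `A` is at most `(1 - q ^ s) ^ (n - s)`. A union bound over the at most `(2 (n + 1)) ^ m`
pairs `(S, A)` with `|S| ≤ m` gives failure probability at most
`(2 (n + 1)) ^ m (1 - q ^ m) ^ (n - m)`. If `m = o(log n)` then `q ^ m ≥ n ^ (-1/4)` eventually,
so this is at most `exp (2 log² n + log n - n ^ (3/4)) → 0`; `m = ⌊log₂ log₂ n⌋` qualifies.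
-/

open Real Finset Asymptotics Topology

theorem MeasureTheory.Measure.pi_map_comp_of_injective {ι α β γ : Type*} [Fintype ι] [Fintype α]
    [Fintype β] [MeasurableSpace γ] (μ : ι → Measure γ) [∀ i, IsProbabilityMeasure (μ i)]
    {g : α → β → ι} (hg : Function.Injective (Function.uncurry g)) :
    (Measure.pi μ).map (fun ω a b => ω (g a b)) =
      Measure.pi fun a => Measure.pi fun b => μ (g a b) := by
  have hcomp : (fun (ω : ι → γ) a b => ω (g a b)) =
      MeasurableEquiv.curry α β γ ∘ fun ω p => ω (Function.uncurry g p) := rfl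
  rw [hcomp, ← Measure.map_map (by fun_prop) (by fun_prop), ← Measure.infinitePi_eq_pi,
    Measure.map_infinitePi_infinitePi_of_inj hg, Function.uncurry_def,
    Measure.infinitePi_map_curry (fun a b => μ (g a b))]
  simp_rw [Measure.infinitePi_eq_pi]

theorem tendsto_prob_one_of_tendsto_prob_compl {ι : Type*} {l : Filter ι} {Ω : ι → Type*}
    [∀ i, MeasurableSpace (Ω i)] {μ : ∀ i, Measure (Ω i)} [∀ i, IsProbabilityMeasure (μ i)]
    {s : ∀ i, Set (Ω i)} (hs : ∀ i, MeasurableSet (s i))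
    (h : Tendsto (fun i => μ i (s i)ᶜ) l (𝓝 0)) : Tendsto (fun i => μ i (s i)) l (𝓝 1) := by
  have := ENNReal.Tendsto.sub tendsto_const_nhds h (Or.inl ENNReal.one_ne_top)
  simp_rw [tsub_zero, ← prob_compl_eq_one_sub (hs _).compl, compl_compl] at this
  exact this

theorem ENNReal.one_sub_pow_pow_sub_le_of_le {x : ENNReal} (hx : x ≤ 1) (n : ℕ) {s m : ℕ}
    (h : s ≤ m) : (1 - x ^ s) ^ (n - s) ≤ (1 - x ^ m) ^ (n - m) :=
  calc (1 - x ^ s) ^ (n - s) ≤ (1 - x ^ m) ^ (n - s) :=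
        pow_le_pow_left₀ bot_le (tsub_le_tsub_left (pow_le_pow_right_of_le_one' hx h) 1) _
    _ ≤ (1 - x ^ m) ^ (n - m) := pow_le_pow_right_of_le_one' tsub_le_self (Nat.sub_le_sub_left h n)

theorem Finset.card_filter_card_le_le_pow {α : Type*} [Fintype α] (m : ℕ) :
    #{S : Finset α | #S ≤ m} ≤ (Fintype.card α + 1) ^ m := by
  classical
  have hsub : ({S : Finset α | #S ≤ m} : Finset (Finset α)) ⊆
      (range (m + 1)).biUnion fun k => powersetCard k univ := by
    intro S hS
    simp only [mem_filter, mem_univ, true_and] at hS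
    simp only [mem_biUnion, mem_range, mem_powersetCard]
    exact ⟨#S, Nat.lt_succ_of_le hS, subset_univ S, rfl⟩
  calc #{S : Finset α | #S ≤ m}
      ≤ ∑ k ∈ range (m + 1), #(powersetCard k (univ : Finset α)) :=
        (card_le_card hsub).trans card_biUnion_le
    _ ≤ ∑ k ∈ range (m + 1), Fintype.card α ^ k * 1 ^ (m - k) * m.choose k := by
        refine sum_le_sum fun k hk => ?_
        rw [card_powersetCard, card_univ, one_pow, mul_one]
        exact (Nat.choose_le_pow _ _).trans
          (Nat.le_mul_of_pos_right _ (Nat.choose_pos (Nat.lt_succ_iff.mp (mem_range.mp hk))))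
    _ = (Fintype.card α + 1) ^ m := (add_pow _ _ _).symm

theorem isLittleO_logb_logb_log :
    (fun x : ℝ => logb 2 (logb 2 x)) =o[atTop] log := by
  have hloglog : (fun x => (log 2)⁻¹ * (log (log x) - log (log 2))) =o[atTop] log :=
    ((isLittleO_log_id_atTop.comp_tendsto tendsto_log_atTop).sub
      isLittleO_const_log_atTop).const_mul_left _
  refine hloglog.congr' ?_ EventuallyEq.rfl
  filter_upwards [eventually_gt_atTop 1] with x hx
  rw [logb, logb, log_div (log_pos hx).ne' (log_pos one_lt_two).ne', inv_mul_eq_div]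

theorem Asymptotics.IsLittleO.natFloor {α : Type*} {l : Filter α} {f g : α → ℝ}
    (h : f =o[l] g) : (fun x => (⌊f x⌋₊ : ℝ)) =o[l] g := by
  refine IsBigO.trans_isLittleO (IsBigO.of_bound 1 (Eventually.of_forall fun x => ?_)) h
  rw [one_mul, norm_of_nonneg (Nat.cast_nonneg _)]
  rcases le_total 0 (f x) with hf | hf
  · exact (Nat.floor_le hf).trans (le_norm_self _)
  · simp [Nat.floor_of_nonpos hf]

theorem two_mul_succ_pow_mul_one_sub_pow_le_exp {q : ℝ} {n m : ℕ} (hq0 : 0 ≤ q) (hq1 : q ≤ 1)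
    (hn : 3 ≤ n) (hm : (m : ℝ) ≤ log n)
    (hqm : (n : ℝ) ^ (-(1 / 4) : ℝ) ≤ q ^ m) :
    (2 * (n + 1) : ℝ) ^ m * (1 - q ^ m) ^ (n - m) ≤
      exp (2 * log n ^ 2 + log n - n ^ (3 / 4 : ℝ)) := by
  have hn0 : (0 : ℝ) < n := by positivity
  have hn3 : (3 : ℝ) ≤ n := by exact_mod_cast hn
  have hlog : 0 ≤ log n := log_nonneg (by linarith)
  have hqm1 : q ^ m ≤ 1 := pow_le_one₀ hq0 hq1
  have hcount : (2 * (n + 1) : ℝ) ^ m ≤ exp (2 * log n ^ 2) :=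
    calc (2 * (n + 1) : ℝ) ^ m ≤ (exp (2 * log n)) ^ m := by
          rw [show 2 * log n = log (n ^ 2) by rw [log_pow]; norm_num, exp_log (by positivity)]
          exact pow_le_pow_left₀ (by positivity) (by nlinarith) m
      _ = exp (m * (2 * log n)) := (exp_nat_mul _ _).symm
      _ ≤ exp (2 * log n ^ 2) := exp_le_exp.mpr (by nlinarith)
  have hmiss : (1 - q ^ m) ^ (n - m) ≤ exp (log n - n ^ (3 / 4 : ℝ)) := by
    have hcast : (n : ℝ) ≤ ((n - m : ℕ) : ℝ) + m := by exact_mod_cast le_tsub_add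
    have hsurvivors : ((n : ℝ) - m) * q ^ m ≤ (n - m : ℕ) * q ^ m :=
      mul_le_mul_of_nonneg_right (by linarith) (pow_nonneg hq0 _)
    have hmain : (n : ℝ) ^ (-(1 / 4) : ℝ) * n ≤ q ^ m * n := mul_le_mul_of_nonneg_right hqm hn0.le
    have hlost : (m : ℝ) * q ^ m ≤ m := mul_le_of_le_one_right (Nat.cast_nonneg _) hqm1
    have hrpow : (n : ℝ) ^ (3 / 4 : ℝ) = n ^ (-(1 / 4) : ℝ) * n := by
      rw [← rpow_add_one hn0.ne']; norm_num
    calc (1 - q ^ m) ^ (n - m) ≤ exp (-q ^ m) ^ (n - m) :=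
          pow_le_pow_left₀ (by linarith) (one_sub_le_exp_neg _) _
      _ = exp ((n - m : ℕ) * -q ^ m) := (exp_nat_mul _ _).symm
      _ ≤ exp (log n - n ^ (3 / 4 : ℝ)) := exp_le_exp.mpr (by linarith)
  calc _ ≤ exp (2 * log n ^ 2) * exp (log n - n ^ (3 / 4 : ℝ)) :=
        mul_le_mul hcount hmiss (pow_nonneg (by linarith) _) (exp_pos _).le
    _ = _ := by rw [← exp_add]; ring_nf

theorem tendsto_exp_two_mul_log_sq_add_log_sub_rpow :
    Tendsto (fun x : ℝ => exp (2 * log x ^ 2 + log x - x ^ (3 / 4 : ℝ))) atTop (𝓝 0) := by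
  have hlog : (fun x : ℝ => 2 * log x ^ 2 + log x) =o[atTop] fun x => x ^ (3 / 4 : ℝ) := by
    have hsq := (isLittleO_log_rpow_rpow_atTop 2 (by norm_num : (0 : ℝ) < 3 / 4)).const_mul_left 2
    simp only [rpow_two] at hsq
    exact hsq.add (isLittleO_log_rpow_atTop (by norm_num))
  have hhalf : ∀ᶠ x : ℝ in atTop,
      2 * log x ^ 2 + log x - x ^ (3 / 4 : ℝ) ≤ -(1 / 2 * x ^ (3 / 4 : ℝ)) := by
    filter_upwards [hlog.bound (by norm_num : (0 : ℝ) < 1 / 2), eventually_ge_atTop 0]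
      with x hx hx0
    rw [norm_of_nonneg (rpow_nonneg hx0 _)] at hx
    linarith [le_norm_self (2 * log x ^ 2 + log x)]
  refine tendsto_exp_atBot.comp (tendsto_atBot_mono' _ hhalf ?_)
  exact tendsto_neg_atTop_atBot.comp ((tendsto_rpow_atTop (by norm_num)).const_mul_atTop
    (by norm_num))

theorem tendsto_two_mul_succ_pow_mul_one_sub_pow {q : ℝ} (hq0 : 0 < q) (hq1 : q ≤ 1)
    {m : ℕ → ℕ} (hm : (fun n => (m n : ℝ)) =o[atTop] fun n => log n) :
    Tendsto (fun n : ℕ => (2 * (n + 1) : ℝ) ^ m n * (1 - q ^ m n) ^ (n - m n)) atTop (𝓝 0) := by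
  have hpos : 0 < 1 - log q := by linarith [log_nonpos hq0.le hq1]
  have hc : 0 < 1 / (4 * (1 - log q)) := by positivity
  have hbound : ∀ᶠ n : ℕ in atTop, (2 * (n + 1) : ℝ) ^ m n * (1 - q ^ m n) ^ (n - m n) ≤
      exp (2 * log n ^ 2 + log n - n ^ (3 / 4 : ℝ)) := by
    filter_upwards [hm.bound one_pos, hm.bound hc, eventually_ge_atTop 3] with n hlog hsmall hn
    have hn0 : (0 : ℝ) < n := by positivity
    have hlogn : 0 ≤ log n := log_nonneg (by exact_mod_cast (by omega : 1 ≤ n))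
    rw [norm_of_nonneg (Nat.cast_nonneg _), norm_of_nonneg hlogn] at hlog hsmall
    refine two_mul_succ_pow_mul_one_sub_pow_le_exp hq0.le hq1 hn (by linarith) ?_
    -- `q ^ m ≥ n ^ (-1/4)` because `m ≤ log n / (4 (1 - log q))`
    rw [rpow_def_of_pos hn0, ← exp_log (pow_pos hq0 _), log_pow, exp_le_exp]
    have : (m n : ℝ) * (1 - log q) ≤ 1 / 4 * log n :=
      calc (m n : ℝ) * (1 - log q) ≤ 1 / (4 * (1 - log q)) * log n * (1 - log q) :=
            mul_le_mul_of_nonneg_right hsmall hpos.le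
        _ = 1 / 4 * log n := by field_simp
    nlinarith [(Nat.cast_nonneg (m n) : (0 : ℝ) ≤ m n)]
  refine tendsto_of_tendsto_of_tendsto_of_le_of_le' tendsto_const_nhds
    (tendsto_exp_two_mul_log_sq_add_log_sub_rpow.comp tendsto_natCast_atTop_atTop) ?_ hbound
  filter_upwards with n
  exact mul_nonneg (by positivity) (pow_nonneg (sub_nonneg.mpr (pow_le_one₀ hq0.le hq1)) _)

section Gnp

variable {n : ℕ} {p : ℝ}

instance isProbabilityMeasure_gnp (hp : p ≤ 1) : IsProbabilityMeasure (gnp n p hp) := by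
  unfold gnp; infer_instance

lemma ofReal_min_le_bernoulli_singleton (hp0 : 0 ≤ p) (hp1 : p ≤ 1) (b : Bool) :
    ENNReal.ofReal (min p (1 - p)) ≤
      (PMF.bernoulli (Real.toNNReal p) (Real.toNNReal_le_one.mpr hp1)).toMeasure {b} := by
  rw [PMF.toMeasure_apply_singleton _ _ (measurableSet_singleton _), PMF.bernoulli_apply]
  cases b
  · rw [Bool.cond_false, ENNReal.coe_sub, ENNReal.coe_one, ← ENNReal.ofReal.eq_def,
      ← ENNReal.ofReal_one, ← ENNReal.ofReal_sub _ hp0]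
    exact ENNReal.ofReal_le_ofReal (min_le_right _ _)
  · exact ENNReal.ofReal_le_ofReal (min_le_left _ _)

lemma uncurry_sym2_mk_injective (S : Finset (Fin n)) :
    Function.Injective (Function.uncurry fun (v : {v // v ∉ S}) (u : S) => s(v.1, u.1)) := by
  rintro ⟨⟨v, hv⟩, ⟨u, hu⟩⟩ ⟨⟨v', hv'⟩, ⟨u', hu'⟩⟩ h
  rcases Sym2.eq_iff.mp h with ⟨rfl, rfl⟩ | ⟨rfl, -⟩
  · rfl
  · exact absurd hu' hv

lemma gnp_map_edges_eq_pi (hp : p ≤ 1) (S : Finset (Fin n)) :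
    (gnp n p hp).map (fun ω (v : {v // v ∉ S}) (u : S) => ω s(v.1, u.1)) =
      Measure.pi fun _ => Measure.pi fun _ =>
        (PMF.bernoulli (Real.toNNReal p) (Real.toNNReal_le_one.mpr hp)).toMeasure :=
  Measure.pi_map_comp_of_injective _ (uncurry_sym2_mk_injective S)

lemma neighborFinset_inter_eq_iff (ω : Sym2 (Fin n) → Bool) {S A : Finset (Fin n)} (hA : A ⊆ S)
    {v : Fin n} (hv : v ∉ S) :
    (graphOf ω).neighborFinset v ∩ S = A ↔
      (fun u : S => ω s(v, u.1)) = fun u => decide (u.1 ∈ A) := by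
  have hne : ∀ u ∈ S, v ≠ u := fun u hu h => hv (h ▸ hu)
  simp only [Finset.ext_iff, funext_iff, Finset.mem_inter, SimpleGraph.mem_neighborFinset,
    Subtype.forall]
  constructor
  · intro h u hu
    have := h u
    have := hne u hu
    cases hω : ω s(v, u) <;> simp_all [graphOf]
  · intro h u
    by_cases hu : u ∈ S
    · have := h u hu
      have := hne u hu
      cases hω : ω s(v, u) <;> simp_all [graphOf]
    · exact ⟨fun h' => (hu h'.2).elim, fun h' => (hu (hA h')).elim⟩

theorem gnp_forall_neighborFinset_inter_ne_le (hp0 : 0 ≤ p) (hp1 : p ≤ 1) {S A : Finset (Fin n)}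
    (hA : A ⊆ S) :
    gnp n p hp1 {ω | ∀ v ∉ S, (graphOf ω).neighborFinset v ∩ S ≠ A}
      ≤ (1 - ENNReal.ofReal (min p (1 - p)) ^ #S) ^ (n - #S) := by
  let c : S → Bool := fun u => decide (u.1 ∈ A)
  have hset : {ω | ∀ v ∉ S, (graphOf ω).neighborFinset v ∩ S ≠ A} =
      (fun ω (v : {v // v ∉ S}) (u : S) => ω s(v.1, u.1)) ⁻¹' Set.univ.pi fun _ => {c}ᶜ := by
    ext ω
    simp only [Set.mem_ofPred_eq, Set.mem_preimage, Set.mem_univ_pi, Set.mem_compl_iff,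
      Set.mem_singleton_iff, Subtype.forall]
    exact forall₂_congr fun v hv => (neighborFinset_inter_eq_iff ω hA hv).not
  rw [hset, ← Measure.map_apply (by fun_prop) (.univ_pi fun _ => (measurableSet_singleton c).compl),
    gnp_map_edges_eq_pi, Measure.pi_pi]
  simp only [prob_compl_eq_one_sub (measurableSet_singleton c), Measure.pi_singleton]
  calc _ ≤ ∏ _v : {v // v ∉ S}, (1 - ENNReal.ofReal (min p (1 - p)) ^ #S) := by
        refine prod_le_prod' fun _ _ => tsub_le_tsub_left ?_ 1
        calc ENNReal.ofReal (min p (1 - p)) ^ #S = ∏ _u : S, ENNReal.ofReal (min p (1 - p)) := by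
              simp
          _ ≤ _ := prod_le_prod' fun u _ => ofReal_min_le_bernoulli_singleton hp0 hp1 (c u)
    _ = _ := by simp

theorem gnp_exists_forall_neighborFinset_inter_ne_le (hp0 : 0 ≤ p) (hp1 : p ≤ 1) (m : ℕ) :
    gnp n p hp1 {ω | ∃ S : Finset (Fin n), #S ≤ m ∧
        ∃ A ⊆ S, ∀ v ∉ S, (graphOf ω).neighborFinset v ∩ S ≠ A}
      ≤ ENNReal.ofReal ((2 * (n + 1)) ^ m * (1 - min p (1 - p) ^ m) ^ (n - m)) := by
  set q := min p (1 - p)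
  have hq0 : 0 ≤ q := le_min hp0 (by linarith)
  set x := (1 - ENNReal.ofReal q ^ m) ^ (n - m)
  let untraced (S A : Finset (Fin n)) := {ω | ∀ v ∉ S, (graphOf ω).neighborFinset v ∩ S ≠ A}
  have hq1 : q ≤ 1 := (min_le_left _ _).trans hp1
  have hpair {S A : Finset (Fin n)} (hS : #S ≤ m) (hA : A ∈ S.powerset) :
      gnp n p hp1 (untraced S A) ≤ x :=
    (gnp_forall_neighborFinset_inter_ne_le hp0 hp1 (mem_powerset.mp hA)).trans
      (ENNReal.one_sub_pow_pow_sub_le_of_le (ENNReal.ofReal_le_one.mpr hq1) n hS)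
  calc _ ≤ gnp n p hp1 (⋃ S ∈ ({S | #S ≤ m} : Finset _), ⋃ A ∈ S.powerset, untraced S A) := by
        refine measure_mono fun ω ⟨S, hS, A, hA, hω⟩ => ?_
        simp only [Set.mem_iUnion, mem_filter, mem_univ, true_and, mem_powerset, exists_prop]
        exact ⟨S, hS, A, hA, hω⟩
    _ ≤ ∑ S ∈ ({S | #S ≤ m} : Finset _), ∑ A ∈ S.powerset, gnp n p hp1 (untraced S A) :=
        (measure_biUnion_finset_le _ _).trans (sum_le_sum fun _ _ => measure_biUnion_finset_le _ _)
    _ ≤ ∑ S ∈ ({S | #S ≤ m} : Finset (Finset (Fin n))), 2 ^ m * x := by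
        refine sum_le_sum fun S hS => ?_
        rw [mem_filter] at hS
        calc _ ≤ ∑ _A ∈ S.powerset, x := sum_le_sum fun A hA => hpair hS.2 hA
          _ ≤ 2 ^ m * x := by
            rw [sum_const, card_powerset, nsmul_eq_mul]
            gcongr
            exact_mod_cast Nat.pow_le_pow_right two_pos hS.2
    _ ≤ (n + 1) ^ m * 2 ^ m * x := by
        rw [sum_const, nsmul_eq_mul, ← mul_assoc]
        gcongr
        exact_mod_cast (card_filter_card_le_le_pow m).trans_eq (by rw [Fintype.card_fin])
    _ = _ := by
        have hqm : q ^ m ≤ 1 := pow_le_one₀ hq0 hq1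
        rw [ENNReal.ofReal_mul (by positivity), ENNReal.ofReal_pow (by positivity),
          ENNReal.ofReal_pow (by linarith), ENNReal.ofReal_sub _ (by positivity),
          ENNReal.ofReal_one, ENNReal.ofReal_pow hq0, ENNReal.ofReal_mul zero_le_two,
          ENNReal.ofReal_add (by positivity) zero_le_one, ENNReal.ofReal_natCast,
          ENNReal.ofReal_one, ENNReal.ofReal_ofNat, mul_pow]
        ring

end Gnp

/-- A.a.s., for every vertex set `S` of size at most `C · log log n`, every subset `A ⊆ S`
is the trace on `S` of the neighborhood of some vertex outside `S`. -/
theorem powerset_representation_aas (p : ℝ) (hp0 : 0 < p) (hp1 : p < 1) :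
    ∃ C : ℝ, 0 < C ∧
      Tendsto (fun n : ℕ =>
        gnp n p hp1.le {ω | ∀ S : Finset (Fin n),
          (S.card : ℝ) ≤ C * Real.logb 2 (Real.logb 2 n) →
          ∀ A ⊆ S, ∃ v ∉ S, (graphOf ω).neighborFinset v ∩ S = A})
        atTop (nhds 1) := by
  refine ⟨1, one_pos, tendsto_prob_one_of_tendsto_prob_compl (fun _ => .of_discrete) ?_⟩
  have hq0 : 0 < min p (1 - p) := lt_min hp0 (by linarith)
  have hm : (fun n : ℕ => (⌊logb 2 (logb 2 n)⌋₊ : ℝ)) =o[atTop] fun n => log n :=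
    (isLittleO_logb_logb_log.comp_tendsto tendsto_natCast_atTop_atTop).natFloor
  refine tendsto_of_tendsto_of_tendsto_of_le_of_le tendsto_const_nhds
    (by simpa using ENNReal.tendsto_ofReal (tendsto_two_mul_succ_pow_mul_one_sub_pow hq0
      ((min_le_left _ _).trans hp1.le) hm)) (fun _ => bot_le) fun n => ?_
  refine (measure_mono fun ω hω => ?_).trans
    (gnp_exists_forall_neighborFinset_inter_ne_le hp0.le hp1.le _)
  simp only [Set.mem_compl_iff, Set.mem_ofPred_eq] at hω
  push Not at hω
  obtain ⟨S, hS, A, hA, hnone⟩ := hω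
  exact ⟨S, Nat.le_floor (by linarith), A, hA, hnone⟩
end

section
/- Let 0 < p < 1 and α be fixed real constants, and let m = m(n) be the nearest integer to np + h where h = √(2p(1−p)·n·(½ ln n − ln ln ln n + α)). Then Pr[Bin(n−1,p) = m] = Θ(ln ln n / n); that is, there exist constants C₁ ≥ C₂ > 0 and N₀ such that for all n ≥ N₀ one has C₂ · (ln ln n)/n ≤ Pr[Bin(n−1,p) = m] ≤ C₁ · (ln ln n)/n. -/
/-- `Pr[Bin(N,p) = k]`, the binomial point probability. -/
noncomputable def binomProb (N : ℕ) (p : ℝ) (k : ℕ) : ℝ :=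
  (N.choose k : ℝ) * p ^ k * (1 - p) ^ (N - k)

/-- `h = √(2p(1−p)·n·(½ ln n − ln ln ln n + α))`. -/
noncomputable def hShift (p α : ℝ) (n : ℕ) : ℝ :=
  Real.sqrt (2 * p * (1 - p) * n *
    ((1 / 2) * Real.log n - Real.log (Real.log (Real.log n)) + α))

/-- `m = m(n)`, the nearest integer to `np + h`. -/
noncomputable def mDeg (p α : ℝ) (n : ℕ) : ℕ :=
  (round ((n : ℝ) * p + hShift p α n)).toNat

/-!
Write `N = n - 1`, `m = mDeg p α n` and `d = m - Np`. By Stirling's formula,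
`Pr[Bin(N,p) = m] ~ (2π p(1-p) N)^{-1/2} exp(-N D(m/N ‖ p))` with `D` the relative entropy of
Bernoulli laws, and a third-order Taylor expansion of `D` around `p` gives
`N D(m/N ‖ p) = d²/(2p(1-p)N) + O(|d|³/N²)`. Since `d = h + O(1)` and `h = O(√(n ln n))`, the error
term vanishes and `d²/(2p(1-p)N) = h²/(2p(1-p)n) + o(1) = ½ ln n − ln ln ln n + α + o(1)`, so
`Pr[Bin(N,p) = m] · n / ln ln n → e^{-α} / √(2π p(1-p)) > 0`.
-/

open Filter Real Topology Stirling

lemma tendsto_zero_of_tendsto_abs_pow {ι : Type*} {l : Filter ι} {f : ι → ℝ} {n : ℕ} (hn : n ≠ 0)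
    (h : Tendsto (fun i => |f i| ^ n) l (𝓝 0)) : Tendsto f l (𝓝 0) := by
  have hroot := ((continuousAt_rpow_const 0 (n⁻¹ : ℝ) (Or.inr (by positivity))).tendsto).comp h
  rw [zero_rpow (by positivity)] at hroot
  refine (tendsto_zero_iff_abs_tendsto_zero f).2 (hroot.congr fun i => ?_)
  exact pow_rpow_inv_natCast (abs_nonneg _) hn

lemma exists_bounds_of_tendsto_div {f g : ℕ → ℝ} {c : ℝ} (hc : 0 < c) (hg : ∀ᶠ n in atTop, 0 < g n)
    (h : Tendsto (fun n => f n / g n) atTop (𝓝 c)) :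
    ∃ C₁ C₂ : ℝ, 0 < C₂ ∧ C₂ ≤ C₁ ∧ ∃ N₀ : ℕ, ∀ n ≥ N₀, C₂ * g n ≤ f n ∧ f n ≤ C₁ * g n := by
  obtain ⟨N₀, hN₀⟩ := eventually_atTop.mp <| hg.and <|
    (h.eventually (eventually_gt_nhds (half_lt_self hc))).and
    (h.eventually (eventually_lt_nhds (by linarith : c < 2 * c)))
  refine ⟨2 * c, c / 2, by positivity, by linarith, N₀, fun n hn => ?_⟩
  obtain ⟨hgn, hlo, hhi⟩ := hN₀ n hn
  rw [lt_div_iff₀ hgn] at hlo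
  rw [div_lt_iff₀ hgn] at hhi
  exact ⟨hlo.le, hhi.le⟩

lemma abs_log_one_add_sub_le {u : ℝ} (hu : |u| ≤ 1 / 2) :
    |log (1 + u) - (u - u ^ 2 / 2)| ≤ 2 * |u| ^ 3 := by
  have key := abs_log_sub_add_sum_range_le (x := -u) (by rw [abs_neg]; linarith) 2
  norm_num [Finset.sum_range_succ] at key
  calc |log (1 + u) - (u - u ^ 2 / 2)| ≤ |u| ^ 3 / (1 - |u|) := by
        convert key using 2
        ring
    _ ≤ 2 * |u| ^ 3 := by
        rw [div_le_iff₀ (by linarith)]; nlinarith [pow_nonneg (abs_nonneg u) 3]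

/-- The relative entropy `D(Ber x ‖ Ber p)`. -/
noncomputable def bernoulliKL (p x : ℝ) : ℝ :=
  x * log (x / p) + (1 - x) * log ((1 - x) / (1 - p))

lemma exists_abs_bernoulliKL_sub_le {p : ℝ} (hp0 : 0 < p) (hp1 : p < 1) :
    ∃ C, ∀ t, |t| ≤ p * (1 - p) / 2 →
      |bernoulliKL p (p + t) - t ^ 2 / (2 * p * (1 - p))| ≤ C * |t| ^ 3 := by
  set q := 1 - p with hq
  have hq0 : 0 < q := by linarith
  refine ⟨1 / (2 * p ^ 2) + 1 / (2 * q ^ 2) + 4 / p ^ 3 + 4 / q ^ 3, fun t ht => ?_⟩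
  have hpq : p * q ≤ 1 / 4 := by nlinarith [sq_nonneg (p - q)]
  have htp : |t / p| ≤ 1 / 2 := by
    rw [abs_div, abs_of_pos hp0, div_le_iff₀ hp0]; nlinarith [abs_nonneg t]
  have htq : |-t / q| ≤ 1 / 2 := by
    rw [abs_div, abs_neg, abs_of_pos hq0, div_le_iff₀ hq0]; nlinarith [abs_nonneg t]
  set R₁ := log (1 + t / p) - (t / p - (t / p) ^ 2 / 2)
  set R₂ := log (1 + -t / q) - (-t / q - (-t / q) ^ 2 / 2)
  have hR₁ : |R₁| ≤ 2 * |t| ^ 3 / p ^ 3 := by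
    have := abs_log_one_add_sub_le htp
    rw [abs_div, abs_of_pos hp0] at this
    rwa [mul_div_assoc, ← div_pow]
  have hR₂ : |R₂| ≤ 2 * |t| ^ 3 / q ^ 3 := by
    have := abs_log_one_add_sub_le htq
    rw [abs_div, abs_neg, abs_of_pos hq0] at this
    rwa [mul_div_assoc, ← div_pow]
  have hsplit : bernoulliKL p (p + t) - t ^ 2 / (2 * p * q)
      = (t ^ 3 / (2 * q ^ 2) - t ^ 3 / (2 * p ^ 2)) + ((p + t) * R₁ + (q - t) * R₂) := by
    have e₁ : (p + t) / p = 1 + t / p := by field_simp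
    have e₂ : (1 - (p + t)) / q = 1 + -t / q := by field_simp; ring
    simp only [bernoulliKL, e₁, e₂, R₁, R₂, ← hq]
    field_simp
    ring
  have hpt : |p + t| ≤ 2 := by rw [abs_le] at ht ⊢; constructor <;> nlinarith
  have hqt : |q - t| ≤ 2 := by rw [abs_le] at ht ⊢; constructor <;> nlinarith
  rw [hsplit]
  calc _ ≤ |t ^ 3 / (2 * q ^ 2)| + |t ^ 3 / (2 * p ^ 2)| + |p + t| * |R₁| + |q - t| * |R₂| := by
        rw [← abs_mul, ← abs_mul]
        linarith [abs_add_le (t ^ 3 / (2 * q ^ 2) - t ^ 3 / (2 * p ^ 2))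
            ((p + t) * R₁ + (q - t) * R₂), abs_sub (t ^ 3 / (2 * q ^ 2)) (t ^ 3 / (2 * p ^ 2)),
          abs_add_le ((p + t) * R₁) ((q - t) * R₂)]
    _ ≤ |t| ^ 3 / (2 * q ^ 2) + |t| ^ 3 / (2 * p ^ 2) + 2 * (2 * |t| ^ 3 / p ^ 3)
          + 2 * (2 * |t| ^ 3 / q ^ 3) := by
        rw [abs_div, abs_div, abs_pow, abs_of_pos (by positivity : (0:ℝ) < 2 * q ^ 2),
          abs_of_pos (by positivity : (0:ℝ) < 2 * p ^ 2)]
        gcongr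
    _ = _ := by ring

open Nat in
lemma factorial_eq_stirlingSeq_mul {n : ℕ} (hn : n ≠ 0) :
    (n ! : ℝ) = stirlingSeq n * (√(2 * n) * (n / exp 1) ^ n) := by
  rw [stirlingSeq, div_mul_cancel₀]
  have : (0 : ℝ) < n := by positivity
  positivity

lemma exp_neg_mul_bernoulliKL {p : ℝ} (hp0 : 0 < p) (hp1 : p < 1) {N k : ℕ} (hk : 0 < k)
    (hkN : k < N) :
    exp (-(N * bernoulliKL p (k / N)))
      = (N * p / k) ^ k * (N * (1 - p) / (N - k : ℕ)) ^ (N - k) := by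
  have hq : 0 < 1 - p := by linarith
  have hN : (0 : ℝ) < N := Nat.cast_pos.mpr (by omega)
  have hk' : (0 : ℝ) < k := by positivity
  have hNk : (0 : ℝ) < (N - k : ℕ) := by have := Nat.sub_pos_of_lt hkN; positivity
  have hx : (1 : ℝ) - k / N = (N - k : ℕ) / N := by
    rw [Nat.cast_sub hkN.le]; field_simp
  have hexp : -(N * bernoulliKL p (k / N))
      = k * log (N * p / k) + (N - k : ℕ) * log (N * (1 - p) / (N - k : ℕ)) := by
    rw [bernoulliKL, hx, div_div, div_div, ← inv_div (N * p), ← inv_div (N * (1 - p)), log_inv,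
      log_inv]
    field_simp
    ring
  rw [hexp, exp_add, exp_nat_mul, exp_nat_mul, exp_log (by positivity), exp_log (by positivity)]

lemma binomProb_eq_stirlingSeq {p : ℝ} (hp0 : 0 < p) (hp1 : p < 1) {N k : ℕ} (hk : 0 < k)
    (hkN : k < N) :
    binomProb N p k = stirlingSeq N / (stirlingSeq k * stirlingSeq (N - k))
      / √(2 * N * (k / N) * (1 - k / N)) * exp (-(N * bernoulliKL p (k / N))) := by
  have hN : (0 : ℝ) < N := Nat.cast_pos.mpr (by omega)
  have hk' : (0 : ℝ) < k := by positivity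
  have hNk : (0 : ℝ) < (N - k : ℕ) := by have := Nat.sub_pos_of_lt hkN; positivity
  have hsqrt : √(2 * N * (k / N) * (1 - k / N)) = √(2 * k) * √(2 * (N - k : ℕ)) / √(2 * N) := by
    rw [← sqrt_mul (by positivity), ← sqrt_div (by positivity), Nat.cast_sub hkN.le]
    congr 1
    field_simp
  have hsk : 0 < stirlingSeq k := (sqrt_pi_le_stirlingSeq hk.ne').trans_lt' (by positivity)
  have hsNk : 0 < stirlingSeq (N - k) :=
    (sqrt_pi_le_stirlingSeq (Nat.sub_pos_of_lt hkN).ne').trans_lt' (by positivity)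
  rw [binomProb, Nat.cast_choose ℝ hkN.le, factorial_eq_stirlingSeq_mul (by omega : N ≠ 0),
    factorial_eq_stirlingSeq_mul hk.ne', factorial_eq_stirlingSeq_mul (Nat.sub_pos_of_lt hkN).ne',
    exp_neg_mul_bernoulliKL hp0 hp1 hk hkN, hsqrt]
  have hNsplit : (N / exp 1) ^ N = (N / exp 1) ^ k * (N / exp 1) ^ (N - k) := by
    rw [← pow_add, Nat.add_sub_cancel' hkN.le]
  rw [hNsplit]
  simp only [div_pow, mul_pow]
  field_simp

lemma binomProb_mul_sqrt_mul_exp_eq {p : ℝ} (hp0 : 0 < p) (hp1 : p < 1) {N k : ℕ} (hk : 0 < k)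
    (hkN : k < N) :
    binomProb N p k * √(2 * π * p * (1 - p) * N)
        * exp (((k : ℝ) - N * p) ^ 2 / (2 * p * (1 - p) * N))
      = stirlingSeq N / (stirlingSeq k * stirlingSeq (N - k))
        * √(π * p * (1 - p) / (k / N * (1 - k / N)))
        * exp (((k : ℝ) - N * p) ^ 2 / (2 * p * (1 - p) * N) - N * bernoulliKL p (k / N)) := by
  have hN : (0 : ℝ) < N := Nat.cast_pos.mpr (by omega)
  have hx0 : (0 : ℝ) < k / N := div_pos (by exact_mod_cast hk) hN
  have hx1 : (k : ℝ) / N < 1 := by rw [div_lt_one hN]; exact_mod_cast hkN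
  have hs : √(π * p * (1 - p) / (k / N * (1 - k / N)))
      = √(2 * π * p * (1 - p) * N) / √(2 * N * (k / N) * (1 - k / N)) := by
    rw [← sqrt_div' _ (mul_pos (mul_pos (by positivity) hx0) (sub_pos.2 hx1)).le]
    congr 1
    field_simp
  rw [binomProb_eq_stirlingSeq hp0 hp1 hk hkN, hs, exp_sub, exp_neg]
  field_simp

section LocalLimit

variable {ι : Type*} {l : Filter ι} {p : ℝ} {N k : ι → ℕ}

lemma tendsto_atTop_of_tendsto_div {c : ℝ} (hc : 0 < c) (hN : Tendsto N l atTop)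
    (h : Tendsto (fun i => (k i : ℝ) / N i) l (𝓝 c)) : Tendsto k l atTop := by
  refine tendsto_natCast_atTop_iff.mp
    ((h.pos_mul_atTop hc (tendsto_natCast_atTop_atTop.comp hN)).congr' ?_)
  filter_upwards [(tendsto_natCast_atTop_atTop.comp hN).eventually_gt_atTop (0 : ℝ)] with i hi
  exact div_mul_cancel₀ _ hi.ne'

lemma tendsto_div_sub_of_tendsto_abs_sub_pow_three_div (hN : Tendsto N l atTop)
    (hd : Tendsto (fun i => |(k i : ℝ) - N i * p| ^ 3 / (N i : ℝ) ^ 2) l (𝓝 0)) :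
    Tendsto (fun i => (k i : ℝ) / N i - p) l (𝓝 0) := by
  have hNr : Tendsto (fun i => (N i : ℝ)) l atTop := tendsto_natCast_atTop_atTop.comp hN
  have h := hd.mul (tendsto_inv_atTop_zero.comp hNr)
  rw [zero_mul] at h
  refine tendsto_zero_of_tendsto_abs_pow three_ne_zero (h.congr' ?_)
  filter_upwards [hNr.eventually_gt_atTop 0] with i hi
  have hdiv : (k i : ℝ) / N i - p = ((k i : ℝ) - N i * p) / N i := by field_simp
  rw [hdiv, abs_div, abs_of_pos hi, Function.comp_apply]
  field_simp

lemma tendsto_sq_div_sub_mul_bernoulliKL (hp0 : 0 < p) (hp1 : p < 1) (hN : Tendsto N l atTop)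
    (hd : Tendsto (fun i => |(k i : ℝ) - N i * p| ^ 3 / (N i : ℝ) ^ 2) l (𝓝 0)) :
    Tendsto (fun i => ((k i : ℝ) - N i * p) ^ 2 / (2 * p * (1 - p) * N i)
      - N i * bernoulliKL p (k i / N i)) l (𝓝 0) := by
  obtain ⟨C, hC⟩ := exists_abs_bernoulliKL_sub_le hp0 hp1
  have hbound := hd.const_mul C
  rw [mul_zero] at hbound
  refine squeeze_zero_norm' ?_ hbound
  have hq : 0 < 1 - p := by linarith
  filter_upwards [(tendsto_natCast_atTop_atTop.comp hN).eventually_gt_atTop (0 : ℝ),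
    ((tendsto_zero_iff_abs_tendsto_zero _).1
      (tendsto_div_sub_of_tendsto_abs_sub_pow_three_div hN hd)).eventually
      (eventually_le_nhds (by positivity : 0 < p * (1 - p) / 2))] with i hNi ht
  rw [Function.comp_apply] at hNi
  set d := (k i : ℝ) - N i * p
  have hxd : (k i : ℝ) / N i - p = d / N i := by simp only [d]; field_simp
  have hkl := hC ((k i : ℝ) / N i - p) ht
  rw [add_sub_cancel, hxd] at hkl
  calc ‖d ^ 2 / (2 * p * (1 - p) * N i) - N i * bernoulliKL p (k i / N i)‖
      = N i * |bernoulliKL p (k i / N i) - (d / N i) ^ 2 / (2 * p * (1 - p))| := by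
        rw [Real.norm_eq_abs, ← abs_of_pos hNi, ← abs_mul, abs_sub_comm, abs_of_pos hNi]
        congr 1; field_simp
    _ ≤ N i * (C * |d / N i| ^ 3) := by gcongr
    _ = C * (|d| ^ 3 / (N i) ^ 2) := by rw [abs_div, abs_of_pos hNi]; field_simp

theorem tendsto_binomProb_mul_sqrt_mul_exp (hp0 : 0 < p) (hp1 : p < 1) (hN : Tendsto N l atTop)
    (hd : Tendsto (fun i => |(k i : ℝ) - N i * p| ^ 3 / (N i : ℝ) ^ 2) l (𝓝 0)) :
    Tendsto (fun i => binomProb (N i) p (k i) * √(2 * π * p * (1 - p) * N i) *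
      exp (((k i : ℝ) - N i * p) ^ 2 / (2 * p * (1 - p) * N i))) l (𝓝 1) := by
  have hq : 0 < 1 - p := by linarith
  set x : ι → ℝ := fun i => (k i : ℝ) / N i
  have hNpos : ∀ᶠ i in l, (0 : ℝ) < N i :=
    (tendsto_natCast_atTop_atTop.comp hN).eventually_gt_atTop 0
  have hx : Tendsto x l (𝓝 p) := by
    simpa using (tendsto_div_sub_of_tendsto_abs_sub_pow_three_div hN hd).add_const p
  have hk : Tendsto k l atTop := tendsto_atTop_of_tendsto_div hp0 hN hx
  have hkN : ∀ᶠ i in l, 0 < k i ∧ k i < N i := by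
    filter_upwards [hk.eventually_gt_atTop 0, hx.eventually (eventually_lt_nhds hp1), hNpos]
      with i hk0 hx1 hNi
    exact ⟨hk0, by rw [div_lt_one hNi] at hx1; exact_mod_cast hx1⟩
  have hNk : Tendsto (fun i => N i - k i) l atTop := by
    refine tendsto_atTop_of_tendsto_div hq hN ((hx.const_sub 1).congr' ?_)
    filter_upwards [hkN, hNpos] with i hi hNi
    rw [Nat.cast_sub hi.2.le]
    simp only [x]
    field_simp
  have hstirling : Tendsto
      (fun i => stirlingSeq (N i) / (stirlingSeq (k i) * stirlingSeq (N i - k i)))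
      l (𝓝 (√π / (√π * √π))) :=
    (tendsto_stirlingSeq_sqrt_pi.comp hN).div ((tendsto_stirlingSeq_sqrt_pi.comp hk).mul
      (tendsto_stirlingSeq_sqrt_pi.comp hNk)) (by positivity)
  have hsqrt : Tendsto (fun i => √(π * p * (1 - p) / (x i * (1 - x i)))) l (𝓝 √π) := by
    have h : Tendsto (fun i => π * p * (1 - p) / (x i * (1 - x i))) l
        (𝓝 (π * p * (1 - p) / (p * (1 - p)))) :=
      tendsto_const_nhds.div (hx.mul (tendsto_const_nhds.sub hx)) (by positivity)
    rw [show π * p * (1 - p) / (p * (1 - p)) = π by field_simp] at h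
    exact h.sqrt
  have hlim := (hstirling.mul hsqrt).mul
    ((continuous_exp.tendsto 0).comp (tendsto_sq_div_sub_mul_bernoulliKL hp0 hp1 hN hd))
  rw [exp_zero, mul_one, div_mul_cancel_right₀ (by positivity), inv_mul_cancel₀ (by positivity)]
    at hlim
  refine hlim.congr' ?_
  filter_upwards [hkN] with i hi
  exact (binomProb_mul_sqrt_mul_exp_eq hp0 hp1 hi.1 hi.2).symm

end LocalLimit

section ModerateShift

noncomputable def hShiftExponent (α : ℝ) (n : ℕ) : ℝ :=
  (1 / 2) * log n - log (log (log n)) + α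

lemma tendsto_log_natCast : Tendsto (fun n : ℕ => log n) atTop atTop :=
  tendsto_log_atTop.comp tendsto_natCast_atTop_atTop

lemma tendsto_log_log_natCast : Tendsto (fun n : ℕ => log (log n)) atTop atTop :=
  tendsto_log_atTop.comp tendsto_log_natCast

lemma eventually_hShiftExponent_mem (α : ℝ) :
    ∀ᶠ n : ℕ in atTop, 0 ≤ hShiftExponent α n ∧ hShiftExponent α n ≤ log n := by
  have hratio : Tendsto (fun n : ℕ => log (log n) / log n) atTop (𝓝 0) := by
    simpa [Function.comp_def] using
      (tendsto_pow_log_div_mul_add_atTop 1 0 1 one_ne_zero).comp tendsto_log_natCast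
  filter_upwards [hratio.eventually (eventually_le_nhds (by norm_num : (0 : ℝ) < 1 / 4)),
    tendsto_log_natCast.eventually_ge_atTop (4 * |α|), tendsto_log_natCast.eventually_gt_atTop 0,
    tendsto_log_log_natCast.eventually_ge_atTop 1] with n hll hα hl hll1
  rw [div_le_iff₀ hl] at hll
  have hlll := log_nonneg hll1
  have hlll_le := log_le_self (x := log (log n)) (by linarith)
  unfold hShiftExponent
  constructor <;> linarith [neg_abs_le α, le_abs_self α]

lemma eventually_exp_neg_hShiftExponent (α : ℝ) :
    ∀ᶠ n : ℕ in atTop, exp (-hShiftExponent α n) = exp (-α) * (log (log n) / √n) := by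
  filter_upwards [tendsto_log_log_natCast.eventually_gt_atTop 0, eventually_gt_atTop 0]
    with n hll hn
  have hsqrt : √(n : ℝ) = exp (log n / 2) := by
    rw [← log_sqrt (Nat.cast_nonneg n), exp_log (by positivity)]
  rw [← exp_log hll, hsqrt, ← exp_sub, ← exp_add, hShiftExponent]
  congr 1
  ring

lemma tendsto_log_pow_div_natCast (k : ℕ) : Tendsto (fun n : ℕ => log n ^ k / n) atTop (𝓝 0) := by
  simpa [Function.comp_def] using
    (tendsto_pow_log_div_mul_add_atTop 1 0 k one_ne_zero).comp tendsto_natCast_atTop_atTop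

lemma tendsto_sqrt_mul_log_div : Tendsto (fun n : ℕ => √(n * log n) / n) atTop (𝓝 0) := by
  refine tendsto_zero_of_tendsto_abs_pow two_ne_zero ((tendsto_log_pow_div_natCast 1).congr' ?_)
  filter_upwards [eventually_gt_atTop 0, tendsto_log_natCast.eventually_ge_atTop 0] with n hn hl
  rw [sq_abs, div_pow, sq_sqrt (by positivity), pow_one]
  field_simp

lemma eventually_half_le_natCast_sub_one : ∀ᶠ n : ℕ in atTop, (n : ℝ) / 2 ≤ (n - 1 : ℕ) := by
  filter_upwards [eventually_ge_atTop 2] with n hn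
  rw [Nat.cast_sub (by omega), Nat.cast_one]
  have : (2 : ℝ) ≤ n := by exact_mod_cast hn
  linarith

variable {p α : ℝ}

lemma hShift_sq (hp0 : 0 ≤ p) (hp1 : p ≤ 1) {n : ℕ} (hL : 0 ≤ hShiftExponent α n) :
    hShift p α n ^ 2 = 2 * p * (1 - p) * n * hShiftExponent α n := by
  have : 0 ≤ 1 - p := by linarith
  exact sq_sqrt (mul_nonneg (by positivity) hL)

lemma hShift_le_sqrt {n : ℕ} (hL₀ : 0 ≤ hShiftExponent α n)
    (hL : hShiftExponent α n ≤ log n) : hShift p α n ≤ √(n * log n) := by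
  refine sqrt_le_sqrt ?_
  have hpq : 2 * p * (1 - p) ≤ 1 := by nlinarith [sq_nonneg (2 * p - 1)]
  have hnL : 0 ≤ (n : ℝ) * hShiftExponent α n := by positivity
  calc 2 * p * (1 - p) * n * hShiftExponent α n
      = 2 * p * (1 - p) * (n * hShiftExponent α n) := by ring
    _ ≤ 1 * (n * hShiftExponent α n) := by gcongr
    _ ≤ n * log n := by rw [one_mul]; gcongr

lemma abs_mDeg_sub_le (hp : 0 ≤ p) (n : ℕ) :
    |(mDeg p α n : ℝ) - (n * p + hShift p α n)| ≤ 1 / 2 := by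
  have hx : 0 ≤ (n : ℝ) * p + hShift p α n := by unfold hShift; positivity
  have hround : 0 ≤ round ((n : ℝ) * p + hShift p α n) := by
    rw [round_eq]; exact Int.floor_nonneg.mpr (by linarith)
  have hcast : (mDeg p α n : ℝ) = round ((n : ℝ) * p + hShift p α n) := by
    rw [mDeg]; exact_mod_cast congrArg ((↑) : ℤ → ℝ) (Int.toNat_of_nonneg hround)
  rw [hcast, abs_sub_comm]
  exact abs_sub_round _

lemma abs_mDeg_sub_hShift_le (hp0 : 0 ≤ p) (hp1 : p ≤ 1) (n : ℕ) :
    |(mDeg p α n : ℝ) - (n - 1 : ℕ) * p - hShift p α n| ≤ 3 / 2 := by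
  have hn : (n : ℝ) - (n - 1 : ℕ) ∈ Set.Icc 0 1 := by
    rcases n with _ | n <;> simp
  have := abs_mDeg_sub_le (α := α) hp0 n
  rw [abs_le] at this ⊢
  constructor <;> nlinarith [hn.1, hn.2]

lemma eventually_abs_mDeg_sub_le (hp0 : 0 ≤ p) (hp1 : p ≤ 1) :
    ∀ᶠ n : ℕ in atTop, |(mDeg p α n : ℝ) - (n - 1 : ℕ) * p| ≤ 2 * √(n * log n) := by
  have hs : Tendsto (fun n : ℕ => √(n * log n)) atTop atTop :=
    tendsto_sqrt_atTop.comp (tendsto_natCast_atTop_atTop.atTop_mul_atTop₀ tendsto_log_natCast)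
  filter_upwards [eventually_hShiftExponent_mem α, hs.eventually_ge_atTop (3 / 2)] with n hL hsn
  have hd := abs_mDeg_sub_hShift_le (α := α) hp0 hp1 n
  have hh := hShift_le_sqrt (p := p) hL.1 hL.2
  have hh0 : 0 ≤ hShift p α n := sqrt_nonneg _
  rw [abs_le] at hd ⊢
  constructor <;> linarith

lemma tendsto_abs_mDeg_sub_pow_three_div (hp0 : 0 ≤ p) (hp1 : p ≤ 1) :
    Tendsto (fun n : ℕ => |(mDeg p α n : ℝ) - (n - 1 : ℕ) * p| ^ 3 / ((n - 1 : ℕ) : ℝ) ^ 2)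
      atTop (𝓝 0) := by
  refine tendsto_zero_of_tendsto_abs_pow two_ne_zero (squeeze_zero'
    (.of_forall fun n => by positivity) ?_
    (by simpa using (tendsto_log_pow_div_natCast 3).const_mul 1024))
  filter_upwards [eventually_abs_mDeg_sub_le (α := α) hp0 hp1, eventually_half_le_natCast_sub_one,
    eventually_gt_atTop 0, tendsto_log_natCast.eventually_ge_atTop 0] with n hd hN hn hl
  set D := |(mDeg p α n : ℝ) - (n - 1 : ℕ) * p|
  have hn' : (0 : ℝ) < n := by exact_mod_cast hn
  have hD6 : D ^ 6 ≤ 64 * (n * log n) ^ 3 := by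
    calc D ^ 6 ≤ (2 * √(n * log n)) ^ 6 := by gcongr
      _ = 64 * (n * log n) ^ 3 := by
        rw [mul_pow, show 6 = 2 * 3 by rfl, pow_mul √_, sq_sqrt (by positivity)]; norm_num
  calc |D ^ 3 / ((n - 1 : ℕ) : ℝ) ^ 2| ^ 2 = D ^ 6 / ((n - 1 : ℕ) : ℝ) ^ 4 := by
        rw [sq_abs]; ring
    _ ≤ 64 * (n * log n) ^ 3 / ((n : ℝ) / 2) ^ 4 := by gcongr
    _ = 1024 * (log n ^ 3 / n) := by field_simp; ring

lemma tendsto_sq_mDeg_sub_sub_sq_hShift_div (hp0 : 0 < p) (hp1 : p < 1) :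
    Tendsto (fun n : ℕ => (((mDeg p α n : ℝ) - (n - 1 : ℕ) * p) ^ 2 - hShift p α n ^ 2)
      / (2 * p * (1 - p) * ((n - 1 : ℕ) : ℝ))) atTop (𝓝 0) := by
  have hq : 0 < 1 - p := by linarith
  have hlim := tendsto_sqrt_mul_log_div.const_mul (9 / (2 * p * (1 - p)))
  rw [mul_zero] at hlim
  refine squeeze_zero_norm' ?_ hlim
  filter_upwards [eventually_hShiftExponent_mem α,
    eventually_abs_mDeg_sub_le (α := α) hp0.le hp1.le, eventually_half_le_natCast_sub_one,
    eventually_gt_atTop 0] with n hL hd hN hn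
  set d := (mDeg p α n : ℝ) - (n - 1 : ℕ) * p
  set h := hShift p α n
  set s := √(n * log n)
  have hdh : |d - h| ≤ 3 / 2 := abs_mDeg_sub_hShift_le hp0.le hp1.le n
  have hh0 : 0 ≤ h := sqrt_nonneg _
  have hdh' : |d + h| ≤ 3 * s :=
    (abs_add_le d h).trans (by linarith [abs_of_nonneg hh0, hShift_le_sqrt (p := p) hL.1 hL.2])
  have hn' : (0 : ℝ) < n := by exact_mod_cast hn
  have hden : 0 < 2 * p * (1 - p) * ((n - 1 : ℕ) : ℝ) := mul_pos (by positivity) (by linarith)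
  rw [Real.norm_eq_abs, abs_div, abs_of_pos hden, sq_sub_sq, abs_mul]
  calc |d + h| * |d - h| / (2 * p * (1 - p) * ((n - 1 : ℕ) : ℝ))
      ≤ 3 * s * (3 / 2) / (2 * p * (1 - p) * ((n : ℝ) / 2)) := by
        gcongr
    _ = 9 / (2 * p * (1 - p)) * (s / n) := by field_simp; ring

lemma tendsto_sq_hShift_div_sub_hShiftExponent (hp0 : 0 < p) (hp1 : p < 1) :
    Tendsto (fun n : ℕ => hShift p α n ^ 2 / (2 * p * (1 - p) * ((n - 1 : ℕ) : ℝ))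
      - hShiftExponent α n) atTop (𝓝 0) := by
  have hlim := (tendsto_log_pow_div_natCast 1).const_mul 2
  rw [mul_zero] at hlim
  refine squeeze_zero_norm' ?_ hlim
  filter_upwards [eventually_hShiftExponent_mem α, eventually_half_le_natCast_sub_one,
    eventually_ge_atTop 1] with n hL hN hn
  have hq : 0 < 1 - p := by linarith
  have hN0 : (0 : ℝ) < (n - 1 : ℕ) := by
    linarith [(by exact_mod_cast hn : (1 : ℝ) ≤ n)]
  have hsplit : hShift p α n ^ 2 / (2 * p * (1 - p) * ((n - 1 : ℕ) : ℝ)) - hShiftExponent α n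
      = hShiftExponent α n / (n - 1 : ℕ) := by
    rw [hShift_sq hp0.le hp1.le hL.1]
    rw [Nat.cast_sub hn, Nat.cast_one] at hN0 ⊢
    field_simp
    ring
  rw [Real.norm_eq_abs, hsplit, abs_div, abs_of_nonneg hL.1, abs_of_pos hN0]
  calc hShiftExponent α n / (n - 1 : ℕ) ≤ log n / ((n : ℝ) / 2) := by
        gcongr
        exact hL.2
    _ = 2 * (log n ^ 1 / n) := by field_simp

lemma tendsto_sq_mDeg_sub_div_sub_hShiftExponent (hp0 : 0 < p) (hp1 : p < 1) :
    Tendsto (fun n : ℕ => ((mDeg p α n : ℝ) - (n - 1 : ℕ) * p) ^ 2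
      / (2 * p * (1 - p) * ((n - 1 : ℕ) : ℝ)) - hShiftExponent α n) atTop (𝓝 0) := by
  have h := (tendsto_sq_mDeg_sub_sub_sq_hShift_div (α := α) hp0 hp1).add
    (tendsto_sq_hShift_div_sub_hShiftExponent (α := α) hp0 hp1)
  rw [zero_add] at h
  exact h.congr fun n => by ring

theorem tendsto_binomProb_mDeg_div (hp0 : 0 < p) (hp1 : p < 1) :
    Tendsto (fun n : ℕ => binomProb (n - 1) p (mDeg p α n) / (log (log n) / n)) atTop
      (𝓝 (exp (-α) / √(2 * π * p * (1 - p)))) := by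
  have hq : 0 < 1 - p := by linarith
  have hlocal := tendsto_binomProb_mul_sqrt_mul_exp hp0 hp1 (tendsto_sub_atTop_nat 1)
    (tendsto_abs_mDeg_sub_pow_three_div (α := α) hp0.le hp1.le)
  have hexp := (continuous_exp.tendsto 0).comp
    (tendsto_sq_mDeg_sub_div_sub_hShiftExponent (α := α) hp0 hp1)
  have hratio : Tendsto (fun n : ℕ => ((n - 1 : ℕ) : ℝ) / n) atTop (𝓝 1) := by
    have h := (tendsto_const_nhds (x := (1 : ℝ))).sub tendsto_one_div_atTop_nhds_zero_nat
    rw [sub_zero] at h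
    refine h.congr' ?_
    filter_upwards [eventually_ge_atTop 1] with n hn
    rw [Nat.cast_sub hn, Nat.cast_one]
    field_simp
  have hsqrt := ((hratio.const_mul (2 * π * p * (1 - p))).sqrt)
  have hlim := (hlocal.div (hexp.const_mul (exp α)) (by positivity)).div hsqrt (by positivity)
  rw [exp_zero, mul_one, mul_one, one_div, ← exp_neg] at hlim
  refine hlim.congr' ?_
  filter_upwards [eventually_exp_neg_hShiftExponent α, eventually_gt_atTop 1,
    tendsto_log_log_natCast.eventually_gt_atTop 0] with n hE hn hll
  have hexpL : exp (hShiftExponent α n) = exp α * √n / log (log n) := by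
    rw [← inv_inv (exp _), ← exp_neg, hE, exp_neg]
    field_simp
  have hN : (0 : ℝ) < (n - 1 : ℕ) := by exact_mod_cast Nat.sub_pos_of_lt hn
  have hn0 : (0 : ℝ) < n := by positivity
  simp only [Pi.div_apply, Function.comp_apply]
  rw [exp_sub, hexpL, ← mul_div_assoc (2 * π * p * (1 - p)), sqrt_div' _ hn0.le]
  field_simp
  rw [sq_sqrt hn0.le]

end ModerateShift

/-- `Pr[Bin(n−1,p) = m] = Θ(ln ln n / n)`. -/
theorem binomProb_at_mDeg_theta (p α : ℝ) (hp0 : 0 < p) (hp1 : p < 1) :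
    ∃ C₁ C₂ : ℝ, 0 < C₂ ∧ C₂ ≤ C₁ ∧ ∃ N₀ : ℕ, ∀ n ≥ N₀,
      C₂ * (Real.log (Real.log n) / n) ≤ binomProb (n - 1) p (mDeg p α n) ∧
      binomProb (n - 1) p (mDeg p α n) ≤ C₁ * (Real.log (Real.log n) / n) := by
  have hq : 0 < 1 - p := by linarith
  refine exists_bounds_of_tendsto_div (by positivity) ?_ (tendsto_binomProb_mDeg_div hp0 hp1)
  filter_upwards [tendsto_log_log_natCast.eventually_gt_atTop 0, eventually_gt_atTop 0]
    with n hll hn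
  positivity
end

section
/- Let 0 < p < 1 and 0 < b < 1 be constants. There exist a constant c = c(b,p) > 0 and N₀ such that for every n ≥ N₀ the following holds. Let G be any graph on n vertices and set ε = n^{−b}. Assume the minimum degree of G is at least (p−ε)n, the maximum degree of G is at most (p+ε)n, and every pair of distinct vertices u, v satisfies (p²−ε)n ≤ codeg(u,v) ≤ (p²+ε)n. Then there exists a vertex set S with |S| ≥ c · log n such that for every subset A ⊆ S there is a vertex v of G with N(v) ∩ S = A. -/
/-!
Greedy construction. Keep a set `S` such that each of the `2^|S|` classes
`{v | N(v) ∩ S = A}` has at least `m^|S| n` vertices, where `m = min(p, 1 - p) / 2`.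
For a class `C`, the degree and codegree bounds control the first and second moments of
`d(w, C)`, giving `∑_w (d(w, C) - p|C|)² ≤ 3ε|C|²n + |C|n`; by Chebyshev only
`O(εn + n/|C|)` vertices are atypical, i.e. have `|d(w, C) - p|C|| > m|C|`. A vertex
`w ∉ S` typical for every class splits each class into two parts of size at least `m|C|`,
so `S ∪ {w}` keeps the invariant. Such `w` exists while `|S| + 2^|S| (εn + m^{-|S|}) = o(n)`,
which holds for `|S|` up to `c log n` with `c` depending on `p` and `b`.
-/

open Finset Filter Real

namespace SimpleGraph

variable {V : Type*} (G : SimpleGraph V) [DecidableRel G.Adj]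

def degreeIn (C : Finset V) (w : V) : ℕ := #{u ∈ C | G.Adj w u}

theorem card_filter_adj_eq_degreeIn (C : Finset V) (w : V) :
    #{v ∈ C | G.Adj v w} = G.degreeIn C w := by
  simp [degreeIn, G.adj_comm]

variable [Fintype V]

theorem sum_degreeIn (C : Finset V) : ∑ w, G.degreeIn C w = ∑ u ∈ C, G.degree u := by
  simp only [degreeIn, card_filter, ← card_neighborFinset_eq_degree, neighborFinset_eq_filter]
  rw [sum_comm]
  simp [G.adj_comm]

theorem ncard_neighborSet (v : V) : (G.neighborSet v).ncard = G.degree v := by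
  rw [← card_neighborFinset_eq_degree, ← Set.ncard_coe_finset, coe_neighborFinset]

variable [DecidableEq V]

theorem sum_degreeIn_sq (C : Finset V) :
    ∑ w, G.degreeIn C w ^ 2 = ∑ u ∈ C, ∑ u' ∈ C, #(G.neighborFinset u ∩ G.neighborFinset u') := by
  simp only [degreeIn, card_filter, sq, sum_mul_sum, neighborFinset_eq_filter, ← filter_and]
  rw [sum_comm]
  refine sum_congr rfl fun u _ => ?_
  rw [sum_comm]
  refine sum_congr rfl fun u' _ => ?_
  simp only [ite_zero_mul_ite_zero, mul_one, G.adj_comm]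

theorem ncard_neighborSet_inter_neighborSet (u v : V) :
    (G.neighborSet u ∩ G.neighborSet v).ncard = #(G.neighborFinset u ∩ G.neighborFinset v) := by
  rw [← Set.ncard_coe_finset, coe_inter, coe_neighborFinset, coe_neighborFinset]

def traceClass (S A : Finset V) : Finset V := {v | G.neighborFinset v ∩ S = A}

noncomputable def atypical (p m : ℝ) (C : Finset V) : Finset V :=
  {w | m * #C < |(G.degreeIn C w : ℝ) - p * #C|}

theorem traceClass_insert {S A : Finset V} {w : V} (hw : w ∉ S) :
    G.traceClass (insert w S) A = {v ∈ G.traceClass S (A.erase w) | G.Adj v w ↔ w ∈ A} := by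
  ext v
  simp only [traceClass, mem_filter, mem_univ, true_and, Finset.ext_iff, mem_inter, mem_insert,
    mem_erase, mem_neighborFinset]
  constructor
  · intro h
    refine ⟨fun x => ?_, by simpa using h w⟩
    by_cases hx : x = w
    · subst hx; simp [hw]
    · simpa [hx] using h x
  · rintro ⟨hS, hw'⟩ x
    by_cases hx : x = w
    · subst hx; simpa using hw'
    · simpa [hx] using hS x

theorem le_card_traceClass_insert {p m : ℝ} (hmp : 2 * m ≤ p) (hmq : 2 * m ≤ 1 - p)
    {S A : Finset V} {w : V} (hw : w ∉ S)
    (htyp : w ∉ G.atypical p m (G.traceClass S (A.erase w))) :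
    m * #(G.traceClass S (A.erase w)) ≤ #(G.traceClass (insert w S) A) := by
  rw [G.traceClass_insert hw]
  set C := G.traceClass S (A.erase w)
  simp only [atypical, mem_filter, mem_univ, true_and, not_lt, abs_le] at htyp
  have hC : (0 : ℝ) ≤ #C := Nat.cast_nonneg _
  have hpC := mul_le_mul_of_nonneg_right hmp hC
  have hqC := mul_le_mul_of_nonneg_right hmq hC
  by_cases hwA : w ∈ A
  · simp only [hwA, iff_true, card_filter_adj_eq_degreeIn]
    linarith
  · have hsplit := card_filter_add_card_filter_not (s := C) (fun v => G.Adj v w)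
    simp only [hwA, iff_false]
    rw [card_filter_adj_eq_degreeIn] at hsplit
    have : (#{v ∈ C | ¬G.Adj v w} : ℝ) = #C - G.degreeIn C w := by
      rw [← hsplit]; push_cast; ring
    rw [this]
    linarith

structure HasDegreeCodegreeBounds (p ε : ℝ) : Prop where
  le_degree : ∀ v, (p - ε) * Fintype.card V ≤ G.degree v
  codegree_le : ∀ u v, u ≠ v →
    (#(G.neighborFinset u ∩ G.neighborFinset v) : ℝ) ≤ (p ^ 2 + ε) * Fintype.card V

variable {G} {p ε : ℝ}

theorem HasDegreeCodegreeBounds.sum_sq_degreeIn_sub_le (hG : G.HasDegreeCodegreeBounds p ε)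
    (hε : 0 ≤ ε) (hp0 : 0 ≤ p) (hp1 : p ≤ 1) (C : Finset V) :
    ∑ w, ((G.degreeIn C w : ℝ) - p * #C) ^ 2
      ≤ 3 * ε * #C ^ 2 * Fintype.card V + #C * Fintype.card V := by
  set n : ℝ := (Fintype.card V : ℝ)
  have hcodeg_le : ∀ u u', (#(G.neighborFinset u ∩ G.neighborFinset u') : ℝ)
      ≤ (p ^ 2 + ε) * n + if u = u' then n else 0 := by
    intro u u'
    split_ifs with h
    · have : (#(G.neighborFinset u ∩ G.neighborFinset u') : ℝ) ≤ n :=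
        Nat.cast_le.mpr (card_le_univ _)
      nlinarith [sq_nonneg p, (by positivity : 0 ≤ n)]
    · simpa using hG.codegree_le u u' h
  have hsecond : ∑ w, (G.degreeIn C w : ℝ) ^ 2 ≤ #C ^ 2 * ((p ^ 2 + ε) * n) + #C * n := by
    have := sum_degreeIn_sq G C
    calc ∑ w, (G.degreeIn C w : ℝ) ^ 2
        = ∑ u ∈ C, ∑ u' ∈ C, (#(G.neighborFinset u ∩ G.neighborFinset u') : ℝ) := by
          exact_mod_cast this
      _ ≤ ∑ u ∈ C, ∑ u' ∈ C, ((p ^ 2 + ε) * n + if u = u' then n else 0) := by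
          gcongr with u _ u' _; exact hcodeg_le u u'
      _ = #C ^ 2 * ((p ^ 2 + ε) * n) + #C * n := by
          simp only [sum_add_distrib, sum_const, sum_ite_eq, sum_ite_mem, inter_self,
            nsmul_eq_mul]
          ring
  have hfirst : #C * ((p - ε) * n) ≤ ∑ w, (G.degreeIn C w : ℝ) := by
    have := sum_degreeIn G C
    calc #C * ((p - ε) * n) = ∑ _u ∈ C, (p - ε) * n := by simp
      _ ≤ ∑ u ∈ C, (G.degree u : ℝ) := sum_le_sum fun u _ => hG.le_degree u
      _ = ∑ w, (G.degreeIn C w : ℝ) := by exact_mod_cast this.symm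
  have hexpand : ∑ w, ((G.degreeIn C w : ℝ) - p * #C) ^ 2
      = ∑ w, (G.degreeIn C w : ℝ) ^ 2 - 2 * p * #C * ∑ w, (G.degreeIn C w : ℝ)
        + n * (p * #C) ^ 2 := by
    have hsq : ∀ w, ((G.degreeIn C w : ℝ) - p * #C) ^ 2
        = (G.degreeIn C w : ℝ) ^ 2 - 2 * p * #C * G.degreeIn C w + (p * #C) ^ 2 :=
      fun w => by ring
    simp only [hsq, sum_add_distrib, sum_sub_distrib, ← mul_sum, sum_const, card_univ,
      nsmul_eq_mul, n]
  have hcross := mul_le_mul_of_nonneg_left hfirst (by positivity : 0 ≤ 2 * p * #C)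
  -- the ε-errors of the two moments add up to `(1 + 2p)ε ≤ 3ε`
  have hslack : 0 ≤ ε * #C ^ 2 * n * (1 - p) := by
    have : 0 ≤ 1 - p := by linarith
    positivity
  rw [hexpand]
  nlinarith

theorem HasDegreeCodegreeBounds.card_atypical_le [Nonempty V]
    (hG : G.HasDegreeCodegreeBounds p ε) (hε : 0 ≤ ε) (hp0 : 0 ≤ p) (hp1 : p ≤ 1) {m δ : ℝ}
    (hm : 0 < m) (hδ : 0 < δ) {C : Finset V} (hC : δ * Fintype.card V ≤ #C) :
    (#(G.atypical p m C) : ℝ) ≤ (3 * ε * Fintype.card V + 1 / δ) / m ^ 2 := by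
  set n : ℝ := (Fintype.card V : ℝ)
  have hC0 : (0 : ℝ) < #C := lt_of_lt_of_le (by positivity) hC
  have hmarkov : (#(G.atypical p m C) : ℝ) * (m * #C) ^ 2
      ≤ ∑ w, ((G.degreeIn C w : ℝ) - p * #C) ^ 2 := by
    rw [← nsmul_eq_mul]
    refine (card_nsmul_le_sum _ _ _ fun w hw => ?_).trans
      (sum_le_sum_of_subset_of_nonneg (subset_univ _) fun w _ _ => sq_nonneg _)
    simp only [atypical, mem_filter, mem_univ, true_and] at hw
    rw [← sq_abs (_ - _)]
    exact pow_le_pow_left₀ (by positivity) hw.le 2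
  have hCn : #C * n ≤ #C ^ 2 / δ := by
    rw [le_div_iff₀ hδ]
    nlinarith
  have hvar := hG.sum_sq_degreeIn_sub_le hε hp0 hp1 C
  rw [le_div_iff₀ (by positivity)]
  refine le_of_mul_le_mul_right ?_ (by positivity : (0 : ℝ) < #C ^ 2)
  calc (#(G.atypical p m C) : ℝ) * m ^ 2 * #C ^ 2 = #(G.atypical p m C) * (m * #C) ^ 2 := by
        ring
    _ ≤ 3 * ε * #C ^ 2 * n + #C * n := hmarkov.trans hvar
    _ ≤ (3 * ε * n + 1 / δ) * #C ^ 2 := by rw [add_mul, one_div_mul_eq_div]; linarith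

theorem HasDegreeCodegreeBounds.exists_notMem_forall_le_card_traceClass_insert
    (hG : G.HasDegreeCodegreeBounds p ε) (hε : 0 ≤ ε) {m δ : ℝ} (hm : 0 < m)
    (hmp : 2 * m ≤ p) (hmq : 2 * m ≤ 1 - p) (hδ : 0 < δ) {S : Finset V}
    (hS : ∀ A ⊆ S, δ * Fintype.card V ≤ #(G.traceClass S A))
    (hcount : #S + 2 ^ #S * ((3 * ε * Fintype.card V + 1 / δ) / m ^ 2) < Fintype.card V) :
    ∃ w ∉ S, ∀ A ⊆ insert w S, m * δ * Fintype.card V ≤ #(G.traceClass (insert w S) A) := by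
  set B := (3 * ε * Fintype.card V + 1 / δ) / m ^ 2
  have : Nonempty V := by
    refine Fintype.card_pos_iff.mp (Nat.cast_pos.mp (lt_of_le_of_lt ?_ hcount))
    positivity
  set bad := S ∪ S.powerset.biUnion fun A => G.atypical p m (G.traceClass S A)
  have hbad : #bad < Fintype.card V := by
    have hunion :
        (#bad : ℝ) ≤ #S + ∑ A ∈ S.powerset, (#(G.atypical p m (G.traceClass S A)) : ℝ) := by
      exact_mod_cast (card_union_le _ _).trans (Nat.add_le_add_left card_biUnion_le _)
    have hsum : ∑ A ∈ S.powerset, (#(G.atypical p m (G.traceClass S A)) : ℝ) ≤ 2 ^ #S * B :=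
      calc _ ≤ ∑ _A ∈ S.powerset, B := sum_le_sum fun A hA =>
              hG.card_atypical_le hε (by linarith) (by linarith) hm hδ (hS A (mem_powerset.1 hA))
        _ = 2 ^ #S * B := by simp [card_powerset]
    exact_mod_cast (by linarith : (#bad : ℝ) < Fintype.card V)
  obtain ⟨w, -, hw⟩ :=
    exists_mem_notMem_of_card_lt_card (s := bad) (t := univ) (by simpa using hbad)
  simp only [bad, mem_union, mem_biUnion, mem_powerset, not_or, not_exists, not_and] at hw
  refine ⟨w, hw.1, fun A hA => ?_⟩
  have hAS : A.erase w ⊆ S := subset_insert_iff.mp hA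
  calc m * δ * Fintype.card V = m * (δ * Fintype.card V) := mul_assoc _ _ _
    _ ≤ m * #(G.traceClass S (A.erase w)) := by gcongr; exact hS _ hAS
    _ ≤ #(G.traceClass (insert w S) A) := G.le_card_traceClass_insert hmp hmq hw.1 (hw.2 _ hAS)

theorem HasDegreeCodegreeBounds.exists_card_eq_forall_le_card_traceClass
    (hG : G.HasDegreeCodegreeBounds p ε) (hε : 0 ≤ ε) {m : ℝ} (hm : 0 < m) (hmp : 2 * m ≤ p)
    (hmq : 2 * m ≤ 1 - p) (k : ℕ)
    (hk : k + (2 / m) ^ k * ((3 * ε * Fintype.card V + 1) / m ^ 2) < Fintype.card V) :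
    ∃ S : Finset V, #S = k ∧ ∀ A ⊆ S, m ^ k * Fintype.card V ≤ #(G.traceClass S A) := by
  induction k with
  | zero => exact ⟨∅, rfl, fun A hA => by simp [subset_empty.1 hA, traceClass]⟩
  | succ k ih =>
    set B := (3 * ε * Fintype.card V + 1) / m ^ 2
    have hr : 2 ≤ 2 / m := by rw [le_div_iff₀ hm]; linarith
    have hB : 0 ≤ B := by positivity
    push_cast at hk
    have hk' : k + (2 / m) ^ k * B < Fintype.card V := by
      have := mul_le_mul_of_nonneg_right
        (pow_le_pow_right₀ (by linarith : (1 : ℝ) ≤ 2 / m) (Nat.le_add_right k 1)) hB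
      linarith
    obtain ⟨S, rfl, hS⟩ := ih hk'
    have hcount : #S + 2 ^ #S * ((3 * ε * Fintype.card V + 1 / m ^ #S) / m ^ 2)
        < Fintype.card V := by
      have : 2 ^ #S * ((3 * ε * Fintype.card V + 1 / m ^ #S) / m ^ 2) ≤ (2 / m) ^ #S * B :=
        calc _ = (2 ^ #S * (3 * ε * Fintype.card V) + (2 / m) ^ #S) / m ^ 2 := by
              rw [div_pow]; field_simp
          _ ≤ ((2 / m) ^ #S * (3 * ε * Fintype.card V) + (2 / m) ^ #S) / m ^ 2 := by gcongr
          _ = (2 / m) ^ #S * B := by ring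
      linarith
    obtain ⟨w, hw, hext⟩ :=
      hG.exists_notMem_forall_le_card_traceClass_insert hε hm hmp hmq (pow_pos hm _) hS hcount
    refine ⟨insert w S, card_insert_of_notMem hw, fun A hA => ?_⟩
    rw [pow_succ']
    exact hext A hA

theorem HasDegreeCodegreeBounds.exists_forall_neighborSet_inter_eq
    (hG : G.HasDegreeCodegreeBounds p ε) (hε : 0 ≤ ε) {m : ℝ} (hm : 0 < m) (hmp : 2 * m ≤ p)
    (hmq : 2 * m ≤ 1 - p) (k : ℕ)
    (hk : k + (2 / m) ^ k * ((3 * ε * Fintype.card V + 1) / m ^ 2) < Fintype.card V) :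
    ∃ S : Finset V, #S = k ∧ ∀ A ⊆ S, ∃ v, G.neighborSet v ∩ S = A := by
  obtain ⟨S, hS, hcl⟩ := hG.exists_card_eq_forall_le_card_traceClass hε hm hmp hmq k hk
  have hV : (0 : ℝ) < Fintype.card V := lt_of_le_of_lt (by positivity) hk
  refine ⟨S, hS, fun A hA => ?_⟩
  obtain ⟨v, hv⟩ := card_pos.1 <| Nat.cast_pos.1 <|
    (by positivity : (0 : ℝ) < m ^ k * Fintype.card V).trans_le (hcl A hA)
  simp only [traceClass, mem_filter, mem_univ, true_and] at hv
  exact ⟨v, by rw [← coe_neighborFinset, ← coe_inter, hv]⟩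

end SimpleGraph

theorem eventually_mul_logb_add_rpow_lt_self {a : ℝ} (ha0 : 0 < a) (ha1 : a < 1) (c K L : ℝ) :
    ∀ᶠ x : ℝ in atTop, c * logb 2 x + K * x ^ (1 - a) + L * x ^ a < x := by
  have hlim : Tendsto (fun x => c * (log x / x) / log 2 + K * x ^ (-a) + L * x ^ (-(1 - a)))
      atTop (nhds 0) := by
    simpa using (((isLittleO_log_id_atTop.tendsto_div_nhds_zero.const_mul c).div_const
      (log 2)).add ((tendsto_rpow_neg_atTop ha0).const_mul K)).add
      ((tendsto_rpow_neg_atTop (sub_pos.2 ha1)).const_mul L)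
  filter_upwards [hlim.eventually_lt_const one_pos, eventually_gt_atTop 0] with x hx hx0
  have e1 : x ^ (1 - a) = x * x ^ (-a) := by rw [sub_eq_add_neg, rpow_add hx0, rpow_one]
  have e2 : x ^ a = x * x ^ (-(1 - a)) := by
    rw [← rpow_one_add' hx0.le (by linarith)]; ring_nf
  have : c * logb 2 x + K * x ^ (1 - a) + L * x ^ a
      = x * (c * (log x / x) / log 2 + K * x ^ (-a) + L * x ^ (-(1 - a))) := by
    rw [e1, e2, logb]; field_simp
  rw [this]
  exact mul_lt_of_lt_one_right hx0 hx

theorem pow_floor_mul_logb_le_rpow {r c x : ℝ} (hr : 1 ≤ r) (hc : 0 ≤ c) (hx : 1 ≤ x) :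
    r ^ ⌊c * logb 2 x⌋₊ ≤ x ^ (c * logb 2 r) := by
  have hlogx : 0 ≤ logb 2 x := logb_nonneg one_lt_two hx
  calc r ^ ⌊c * logb 2 x⌋₊ = r ^ (⌊c * logb 2 x⌋₊ : ℝ) := (rpow_natCast _ _).symm
    _ ≤ r ^ (c * logb 2 x) := rpow_le_rpow_of_exponent_le hr (Nat.floor_le (by positivity))
    _ = x ^ (c * logb 2 r) := by
      rw [rpow_def_of_pos (by linarith), rpow_def_of_pos (by linarith), logb, logb]
      ring_nf

theorem floor_add_pow_mul_lt {b c m x : ℝ} (hm0 : 0 < m) (hm2 : m ≤ 2) (hc : 0 ≤ c)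
    (hcb : c * logb 2 (2 / m) = b / 2) (hx : 1 ≤ x)
    (hsmall : c * logb 2 x + 3 / m ^ 2 * x ^ (1 - b / 2) + 1 / m ^ 2 * x ^ (b / 2) < x) :
    ⌊c * logb 2 x⌋₊ + (2 / m) ^ ⌊c * logb 2 x⌋₊ * ((3 * x ^ (-b) * x + 1) / m ^ 2) < x := by
  have hx0 : 0 < x := by linarith
  have hk : (⌊c * logb 2 x⌋₊ : ℝ) ≤ c * logb 2 x :=
    Nat.floor_le (mul_nonneg hc (logb_nonneg one_lt_two hx))
  have hr : (2 / m) ^ ⌊c * logb 2 x⌋₊ ≤ x ^ (b / 2) :=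
    hcb ▸ pow_floor_mul_logb_le_rpow (by rw [le_div_iff₀ hm0]; linarith) hc hx
  have hexp : x ^ (1 - b / 2) = x ^ (b / 2) * x ^ (-b) * x := by
    rw [← rpow_add hx0, ← rpow_add_one hx0.ne']; ring_nf
  calc _ ≤ c * logb 2 x + x ^ (b / 2) * ((3 * x ^ (-b) * x + 1) / m ^ 2) := by gcongr
    _ = c * logb 2 x + 3 / m ^ 2 * x ^ (1 - b / 2) + 1 / m ^ 2 * x ^ (b / 2) := by
      rw [hexp]; ring
    _ < x := hsmall

/-- In any pseudorandom graph (degrees `(p±ε)n`, codegrees `(p²±ε)n` with `ε = n^{−b}`)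
there is a vertex set `S` of size at least `c·log n` all of whose subsets are realized as
traces of vertex neighborhoods on `S`. -/
theorem pseudorandom_powerset_representation (p b : ℝ)
    (hp0 : 0 < p) (hp1 : p < 1) (hb0 : 0 < b) (hb1 : b < 1) :
    ∃ c : ℝ, 0 < c ∧ ∃ N₀ : ℕ, ∀ n ≥ N₀, ∀ G : SimpleGraph (Fin n),
      (∀ v : Fin n, (p - (n : ℝ) ^ (-b)) * n ≤ ((G.neighborSet v).ncard : ℝ)) →
      (∀ v : Fin n, ((G.neighborSet v).ncard : ℝ) ≤ (p + (n : ℝ) ^ (-b)) * n) →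
      (∀ u v : Fin n, u ≠ v →
        (p ^ 2 - (n : ℝ) ^ (-b)) * n ≤ ((G.neighborSet u ∩ G.neighborSet v).ncard : ℝ) ∧
        ((G.neighborSet u ∩ G.neighborSet v).ncard : ℝ) ≤ (p ^ 2 + (n : ℝ) ^ (-b)) * n) →
      ∃ S : Finset (Fin n), c * Real.logb 2 n ≤ (S.card : ℝ) ∧
        ∀ A ⊆ S, ∃ v : Fin n, G.neighborSet v ∩ (S : Set (Fin n)) = (A : Set (Fin n)) := by
  classical
  obtain ⟨m, hm, hmp, hmq⟩ : ∃ m : ℝ, 0 < m ∧ 2 * m ≤ p ∧ 2 * m ≤ 1 - p :=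
    ⟨min p (1 - p) / 2, half_pos (lt_min hp0 (sub_pos.2 hp1)),
      by linarith [min_le_left p (1 - p)], by linarith [min_le_right p (1 - p)]⟩
  have hlog : 0 < logb 2 (2 / m) := logb_pos one_lt_two (by rw [lt_div_iff₀ hm]; linarith)
  obtain ⟨c, hc, hcb⟩ : ∃ c : ℝ, 0 < c ∧ c * logb 2 (2 / m) = b / 2 :=
    ⟨b / 2 / logb 2 (2 / m), by positivity, div_mul_cancel₀ _ hlog.ne'⟩
  have hev : ∀ᶠ x : ℝ in atTop, 1 ≤ x ∧ 2 ≤ c * logb 2 x ∧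
      c * logb 2 x + 3 / m ^ 2 * x ^ (1 - b / 2) + 1 / m ^ 2 * x ^ (b / 2) < x :=
    (eventually_ge_atTop 1).and <|
      (((tendsto_logb_atTop one_lt_two).const_mul_atTop hc).eventually_ge_atTop 2).and
      (eventually_mul_logb_add_rpow_lt_self (half_pos hb0) (by linarith) _ _ _)
  obtain ⟨N₀, hN₀⟩ := eventually_atTop.1 (tendsto_natCast_atTop_atTop.eventually hev)
  refine ⟨c / 2, half_pos hc, N₀, fun n hn G hdeg _ hcodeg => ?_⟩
  obtain ⟨hn1, hclog, hsmall⟩ := hN₀ n hn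
  have hG : G.HasDegreeCodegreeBounds p ((n : ℝ) ^ (-b)) :=
    ⟨fun v => by simpa [G.ncard_neighborSet] using hdeg v,
      fun u v huv => by simpa [G.ncard_neighborSet_inter_neighborSet] using (hcodeg u v huv).2⟩
  obtain ⟨S, hS, hshatter⟩ := hG.exists_forall_neighborSet_inter_eq (by positivity) hm hmp hmq _
    (by simpa using floor_add_pow_mul_lt hm (by linarith) hc.le hcb hn1 hsmall)
  refine ⟨S, ?_, hshatter⟩
  rw [hS]
  linarith [Nat.sub_one_lt_floor (c * logb 2 n)]
end

section
/- Let 0 < p < 1 and 0 < b < 1 be constants. There exist constants c > 0, C > 0 and N₀ such that the following holds for every n ≥ N₀. Let G be any graph on n vertices satisfying, with ε = n^{−b}, that every vertex degree lies in [(p−ε)n, (p+ε)n] and every pair of distinct vertices u, v satisfies (p²−ε)n ≤ codeg(u,v) ≤ (p²+ε)n. Let 0 ≤ a ≤ c · log n be an integer, let A be a uniformly random a-element subset of the vertex set, and let X_A be the number of vertices v with A ⊆ N(v). Then |E[X_A] − n·p^a| ≤ C · a · n^{−b} · n · p^a and Var[X_A] ≤ E[X_A] + C · n^{2−b} · p^{2a}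 · a. -/
/-!
Double counting expresses the first two moments of `X_A` through binomial coefficients:
`∑_A X_A = ∑_v C(d(v), a)` and `∑_A X_A² = ∑_{u,v} C(codeg(u,v), a)`. Since
`((m - a) / n)^a ≤ C(m, a) / C(n, a) ≤ (m / (n - a))^a`, a set of size `m = (q ± ε) n` gives
`C(m, a) / C(n, a) = q^a (1 + O(aε / q))` as long as `aε` is small, which holds for `a ≤ log n`
and `ε = n^{-b}`. Summing over `v` gives the mean. In the second moment the diagonal `u = v` is
exactly `E[X_A]`, and the off-diagonal part, at most `n² p^{2a} (1 + O(aε))`, cancels against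
`E[X_A]² ≥ n² p^{2a} (1 - O(aε))`.
-/

open Finset Filter Topology

/-- The number of vertices `v` of `G` whose neighborhood contains the set `A`. -/
noncomputable def supersetCount {n : ℕ} (G : SimpleGraph (Fin n)) (A : Finset (Fin n)) : ℝ :=
  ({v : Fin n | (A : Set (Fin n)) ⊆ G.neighborSet v}.ncard : ℝ)

/-- The expectation of `X_A = supersetCount G A` over a uniformly random `a`-subset `A`. -/
noncomputable def meanX {n : ℕ} (G : SimpleGraph (Fin n)) (a : ℕ) : ℝ :=
  (∑ A ∈ Finset.powersetCard a (Finset.univ : Finset (Fin n)), supersetCount G A) /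
    (Finset.powersetCard a (Finset.univ : Finset (Fin n))).card

/-- The variance of `X_A = supersetCount G A` over a uniformly random `a`-subset `A`. -/
noncomputable def varX {n : ℕ} (G : SimpleGraph (Fin n)) (a : ℕ) : ℝ :=
  (∑ A ∈ Finset.powersetCard a (Finset.univ : Finset (Fin n)),
      (supersetCount G A - meanX G a) ^ 2) /
    (Finset.powersetCard a (Finset.univ : Finset (Fin n))).card

theorem sum_powersetCard_card_filter_subset {ι α : Type*} [Fintype ι] [Fintype α]
    [DecidableEq α] (t : ι → Finset α) (a : ℕ) :
    ∑ A ∈ powersetCard a univ, #{i | A ⊆ t i} = ∑ i, (#(t i)).choose a := by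
  simp_rw [card_filter]
  rw [sum_comm]
  refine sum_congr rfl fun i _ => ?_
  rw [← card_filter, ← card_powersetCard]
  congr 1
  ext A
  simp [mem_powersetCard, and_comm]

theorem sum_sq_sub_average_div_card {ι : Type*} (s : Finset ι) (f : ι → ℝ) :
    (∑ i ∈ s, (f i - (∑ j ∈ s, f j) / #s) ^ 2) / #s =
      (∑ i ∈ s, f i ^ 2) / #s - ((∑ j ∈ s, f j) / #s) ^ 2 := by
  obtain rfl | hs := s.eq_empty_or_nonempty
  · simp
  have hc : (#s : ℝ) ≠ 0 := by exact_mod_cast hs.card_pos.ne'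
  set m := (∑ j ∈ s, f j) / #s
  have hsum : ∑ j ∈ s, f j = #s * m := by rw [mul_div_cancel₀ _ hc]
  simp only [sub_sq, sum_add_distrib, sum_sub_distrib, ← sum_mul, ← mul_sum, hsum, sum_const,
    nsmul_eq_mul]
  field_simp
  ring

theorem one_add_pow_le_one_add_two_mul {x : ℝ} (hx : 0 ≤ x) {a : ℕ} (h : 2 * a * x ≤ 1) :
    (1 + x) ^ a ≤ 1 + 2 * a * x := by
  induction a with
  | zero => simp
  | succ a ih =>
    push_cast at h ⊢
    have ih' := ih (by nlinarith)
    calc (1 + x) ^ (a + 1) = (1 + x) ^ a * (1 + x) := pow_succ _ _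
      _ ≤ (1 + 2 * a * x) * (1 + x) := by gcongr
      _ ≤ 1 + 2 * (a + 1) * x := by nlinarith

theorem choose_div_choose_eq_descFactorial_div (m n a : ℕ) :
    (m.choose a : ℝ) / n.choose a = m.descFactorial a / n.descFactorial a := by
  simp only [Nat.descFactorial_eq_factorial_mul_choose, Nat.cast_mul]
  rw [mul_div_mul_left _ _ (by positivity)]

theorem sub_div_pow_le_choose_div_choose {m n a : ℕ} (ham : a ≤ m) (han : a ≤ n) :
    (((m : ℝ) - a) / n) ^ a ≤ (m.choose a : ℝ) / n.choose a := by
  have hdesc : (0 : ℝ) < n.descFactorial a := by exact_mod_cast Nat.descFactorial_pos.2 han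
  rw [choose_div_choose_eq_descFactorial_div, div_pow]
  refine div_le_div₀ (by positivity) ?_ hdesc (by exact_mod_cast n.descFactorial_le_pow a)
  rw [← Nat.cast_sub ham]
  exact_mod_cast (Nat.pow_le_pow_left (by omega) a).trans (m.pow_sub_le_descFactorial a)

theorem choose_div_choose_le_div_sub_pow {m n a : ℕ} (han : a < n) :
    (m.choose a : ℝ) / n.choose a ≤ ((m : ℝ) / (n - a)) ^ a := by
  have hdesc : (0 : ℝ) < n.descFactorial a := by exact_mod_cast Nat.descFactorial_pos.2 han.le
  have hna : (0 : ℝ) < n - a := by rw [sub_pos]; exact_mod_cast han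
  rw [choose_div_choose_eq_descFactorial_div, div_pow]
  refine div_le_div₀ (by positivity) (by exact_mod_cast m.descFactorial_le_pow a)
    (by positivity) ?_
  rw [← Nat.cast_sub han.le]
  exact_mod_cast (n - a).pow_le_pow_left (by omega) a |>.trans (n.pow_sub_le_descFactorial a)

theorem add_pow_le_pow_mul_one_add {q δ : ℝ} (hq : 0 < q) (hδ : 0 ≤ δ) {a : ℕ}
    (h : 2 * a * δ ≤ q) :
    (q + δ) ^ a ≤ q ^ a * (1 + 2 * a * δ / q) := by
  have hsplit : q + δ = q * (1 + δ / q) := by field_simp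
  rw [hsplit, mul_pow, mul_div_assoc]
  gcongr
  exact one_add_pow_le_one_add_two_mul (by positivity) (by rwa [← mul_div_assoc, div_le_one hq])

theorem pow_mul_one_sub_le_sub_pow {q δ : ℝ} (hq : 0 < q) (hδ : δ ≤ 2 * q) (a : ℕ) :
    q ^ a * (1 - a * δ / q) ≤ (q - δ) ^ a := by
  have hsplit : q - δ = q * (1 + -(δ / q)) := by field_simp; ring
  rw [hsplit, mul_pow, mul_div_assoc, sub_eq_add_neg, ← mul_neg]
  gcongr
  refine one_add_mul_le_pow ?_ a
  rw [neg_le_neg_iff, div_le_iff₀ hq]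
  linarith

theorem abs_choose_div_choose_sub_pow_le {q ε : ℝ} {m n a : ℕ} (hq : 0 < q) (hq1 : q ≤ 1)
    (hmn : m ≤ n) (hm : |(m : ℝ) - q * n| ≤ ε * n) (ha : 4 * a ≤ ε * n) (hε : 2 * ε ≤ q)
    (haε : 4 * a * ε ≤ q) :
    |(m.choose a : ℝ) / n.choose a - q ^ a| ≤ 4 * a * ε / q * q ^ a := by
  obtain rfl | hapos := Nat.eq_zero_or_pos a
  · simp
  obtain ⟨hm_lo, hm_hi⟩ := abs_sub_le_iff.1 hm
  have ha1 : (1 : ℝ) ≤ a := by exact_mod_cast hapos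
  have hε0 : 0 ≤ ε := by nlinarith [(Nat.cast_nonneg n : (0 : ℝ) ≤ n)]
  have hmn' : (m : ℝ) ≤ n := by exact_mod_cast hmn
  have hεn : ε * n ≤ m := by nlinarith
  have ham : a ≤ m := by exact_mod_cast (show (a : ℝ) ≤ m by linarith)
  have han : a < n := by exact_mod_cast (show (a : ℝ) < n by linarith)
  have hn : (0 : ℝ) < n := by linarith
  rw [abs_sub_le_iff, sub_le_iff_le_add', sub_le_comm]
  constructor
  · have hna : (0 : ℝ) < n - a := by linarith
    have hhi : (m : ℝ) / (n - a) ≤ q + 2 * ε := by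
      rw [div_le_iff₀ hna]
      nlinarith
    calc (m.choose a : ℝ) / n.choose a ≤ ((m : ℝ) / (n - a)) ^ a :=
          choose_div_choose_le_div_sub_pow han
      _ ≤ (q + 2 * ε) ^ a := pow_le_pow_left₀ (by positivity) hhi a
      _ ≤ q ^ a * (1 + 2 * a * (2 * ε) / q) :=
          add_pow_le_pow_mul_one_add hq (by linarith) (by linarith)
      _ = q ^ a + 4 * a * ε / q * q ^ a := by ring
  · have hlo : q - 2 * ε ≤ ((m : ℝ) - a) / n := by
      rw [le_div_iff₀ hn]
      nlinarith
    calc q ^ a - 4 * a * ε / q * q ^ a = q ^ a * (1 - 4 * a * ε / q) := by ring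
      _ ≤ q ^ a * (1 - a * (2 * ε) / q) :=
        mul_le_mul_of_nonneg_left
          (sub_le_sub_left (div_le_div_of_nonneg_right (by nlinarith) hq.le) 1) (by positivity)
      _ ≤ (q - 2 * ε) ^ a := pow_mul_one_sub_le_sub_pow hq (by linarith) a
      _ ≤ (((m : ℝ) - a) / n) ^ a := pow_le_pow_left₀ (by linarith) hlo a
      _ ≤ (m.choose a : ℝ) / n.choose a := sub_div_pow_le_choose_div_choose ham han.le

section Graph

variable {n : ℕ} (G : SimpleGraph (Fin n))

theorem supersetCount_eq_card [DecidableRel G.Adj] (A : Finset (Fin n)) :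
    supersetCount G A = #{v | A ⊆ G.neighborFinset v} := by
  rw [supersetCount, ← Set.ncard_coe_finset]
  congr 3
  ext v
  simp [Set.subset_def, subset_iff]

theorem supersetCount_sq_eq_card [DecidableRel G.Adj] (A : Finset (Fin n)) :
    supersetCount G A ^ 2 =
      #{x : Fin n × Fin n | A ⊆ G.neighborFinset x.1 ∩ G.neighborFinset x.2} := by
  simp_rw [supersetCount_eq_card, sq, ← Nat.cast_mul, ← card_product, subset_inter_iff,
    ← filter_product, univ_product_univ]

theorem ncard_neighborSet_eq_card [DecidableRel G.Adj] (v : Fin n) :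
    (G.neighborSet v).ncard = #(G.neighborFinset v) := by
  rw [← Set.ncard_coe_finset, SimpleGraph.coe_neighborFinset]

theorem ncard_neighborSet_inter_eq_card [DecidableRel G.Adj] (u v : Fin n) :
    (G.neighborSet u ∩ G.neighborSet v).ncard = #(G.neighborFinset u ∩ G.neighborFinset v) := by
  rw [← Set.ncard_coe_finset, coe_inter, SimpleGraph.coe_neighborFinset,
    SimpleGraph.coe_neighborFinset]

theorem sum_supersetCount (a : ℕ) :
    ∑ A ∈ powersetCard a univ, supersetCount G A =
      ∑ v, ((G.neighborSet v).ncard.choose a : ℝ) := by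
  classical
  simp_rw [supersetCount_eq_card, ncard_neighborSet_eq_card]
  exact_mod_cast sum_powersetCard_card_filter_subset _ a

theorem sum_supersetCount_sq (a : ℕ) :
    ∑ A ∈ powersetCard a univ, supersetCount G A ^ 2 =
      ∑ u, ∑ v, ((G.neighborSet u ∩ G.neighborSet v).ncard.choose a : ℝ) := by
  classical
  simp_rw [supersetCount_sq_eq_card, ncard_neighborSet_inter_eq_card, ← Fintype.sum_prod_type']
  exact_mod_cast sum_powersetCard_card_filter_subset
    (fun x : Fin n × Fin n => G.neighborFinset x.1 ∩ G.neighborFinset x.2) a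

theorem meanX_eq_sum (a : ℕ) :
    meanX G a = ∑ v, ((G.neighborSet v).ncard.choose a : ℝ) / n.choose a := by
  rw [meanX, sum_supersetCount, card_powersetCard, card_univ, Fintype.card_fin, sum_div]

theorem varX_eq_sum (a : ℕ) :
    varX G a = meanX G a +
      ∑ u, ∑ v ∈ univ.erase u, ((G.neighborSet u ∩ G.neighborSet v).ncard.choose a : ℝ) /
        n.choose a - meanX G a ^ 2 := by
  rw [varX, meanX, sum_sq_sub_average_div_card, ← meanX, sum_supersetCount_sq, card_powersetCard,
    card_univ, Fintype.card_fin, sum_div, meanX_eq_sum, ← sum_add_distrib]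
  congr 1
  refine sum_congr rfl fun u _ => ?_
  rw [sum_div, ← add_sum_erase _ _ (mem_univ u), Set.inter_self]

variable {G} {p ε : ℝ} {a : ℕ}

theorem abs_meanX_sub_le (hp : 0 < p) (hp1 : p ≤ 1)
    (hdeg : ∀ v, |((G.neighborSet v).ncard : ℝ) - p * n| ≤ ε * n)
    (ha : 4 * a ≤ ε * n) (hε : 2 * ε ≤ p) (haε : 4 * a * ε ≤ p) :
    |meanX G a - n * p ^ a| ≤ n * (4 * a * ε / p * p ^ a) := by
  have hdiff : meanX G a - n * p ^ a =
      ∑ v, (((G.neighborSet v).ncard.choose a : ℝ) / n.choose a - p ^ a) := by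
    rw [meanX_eq_sum, sum_sub_distrib, sum_const, card_univ, Fintype.card_fin, nsmul_eq_mul]
  calc |meanX G a - n * p ^ a|
      ≤ ∑ v, |((G.neighborSet v).ncard.choose a : ℝ) / n.choose a - p ^ a| := by
        rw [hdiff]
        exact abs_sum_le_sum_abs _ _
    _ ≤ ∑ _v : Fin n, 4 * a * ε / p * p ^ a := by
        refine sum_le_sum fun v _ => abs_choose_div_choose_sub_pow_le hp hp1 ?_ (hdeg v) ha hε haε
        simpa using (G.neighborSet v).ncard_le_card
    _ = n * (4 * a * ε / p * p ^ a) := by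
        rw [sum_const, card_univ, Fintype.card_fin, nsmul_eq_mul]

theorem sum_offDiag_choose_div_le {q : ℝ} (hq : 0 < q) (hq1 : q ≤ 1) (hε0 : 0 ≤ ε)
    (hcodeg : ∀ u v, u ≠ v →
      |((G.neighborSet u ∩ G.neighborSet v).ncard : ℝ) - q * n| ≤ ε * n)
    (ha : 4 * a ≤ ε * n) (hε : 2 * ε ≤ q) (haε : 4 * a * ε ≤ q) :
    ∑ u, ∑ v ∈ univ.erase u, ((G.neighborSet u ∩ G.neighborSet v).ncard.choose a : ℝ) /
      n.choose a ≤ n ^ 2 * (q ^ a * (1 + 4 * a * ε / q)) := by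
  have hbound : ∀ u, ∀ v ∈ univ.erase u,
      ((G.neighborSet u ∩ G.neighborSet v).ncard.choose a : ℝ) / n.choose a ≤
        q ^ a * (1 + 4 * a * ε / q) := by
    intro u v hv
    have := abs_choose_div_choose_sub_pow_le hq hq1
      (by simpa using (G.neighborSet u ∩ G.neighborSet v).ncard_le_card)
      (hcodeg u v (ne_of_mem_erase hv).symm) ha hε haε
    linarith [(abs_le.1 this).2]
  calc _ ≤ ∑ _u : Fin n, ∑ _v : Fin n, q ^ a * (1 + 4 * a * ε / q) :=
        sum_le_sum fun u _ => (sum_le_sum (hbound u)).trans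
          (sum_le_sum_of_subset_of_nonneg (erase_subset _ _) fun _ _ _ => by positivity)
    _ = _ := by simp only [sum_const, card_univ, Fintype.card_fin, nsmul_eq_mul]; ring

theorem le_sq_meanX (hp : 0 < p) (hp1 : p ≤ 1)
    (hdeg : ∀ v, |((G.neighborSet v).ncard : ℝ) - p * n| ≤ ε * n)
    (ha : 4 * a ≤ ε * n) (hε : 2 * ε ≤ p) (haε : 4 * a * ε ≤ p) :
    n ^ 2 * (p ^ 2) ^ a * (1 - 2 * (4 * a * ε / p)) ≤ meanX G a ^ 2 := by
  set t := 4 * a * ε / p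
  have ht1 : t ≤ 1 := by rw [div_le_one hp]; exact haε
  have hlo : n * p ^ a * (1 - t) ≤ meanX G a := by
    have := abs_meanX_sub_le hp hp1 hdeg ha hε haε
    linarith [(abs_le.1 this).1]
  calc n ^ 2 * (p ^ 2) ^ a * (1 - 2 * t) ≤ (n * p ^ a * (1 - t)) ^ 2 := by
        rw [← pow_mul, mul_comm 2 a, pow_mul]
        nlinarith [sq_nonneg (n * p ^ a * t)]
    _ ≤ meanX G a ^ 2 :=
        pow_le_pow_left₀ (mul_nonneg (by positivity) (by linarith)) hlo 2

theorem varX_le (hp : 0 < p) (hp1 : p ≤ 1) (hε0 : 0 ≤ ε)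
    (hdeg : ∀ v, |((G.neighborSet v).ncard : ℝ) - p * n| ≤ ε * n)
    (hcodeg : ∀ u v, u ≠ v →
      |((G.neighborSet u ∩ G.neighborSet v).ncard : ℝ) - p ^ 2 * n| ≤ ε * n)
    (ha : 4 * a ≤ ε * n) (hε : 2 * ε ≤ p ^ 2) (haε : 4 * a * ε ≤ p ^ 2) :
    varX G a ≤ meanX G a + 12 / p ^ 2 * (n ^ 2 * ε) * p ^ (2 * a) * a := by
  have hp2p : p ^ 2 ≤ p := by nlinarith
  have hoff := sum_offDiag_choose_div_le (by positivity) (by nlinarith) hε0 hcodeg ha hε haε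
  have hmean := le_sq_meanX hp hp1 hdeg ha (hε.trans hp2p) (haε.trans hp2p)
  have hconst : 4 * a * ε / p ≤ 4 * a * ε / p ^ 2 :=
    div_le_div_of_nonneg_left (by positivity) (by positivity) hp2p
  rw [varX_eq_sum, pow_mul]
  calc _ ≤ meanX G a + n ^ 2 * ((p ^ 2) ^ a * (1 + 4 * a * ε / p ^ 2)) -
        n ^ 2 * (p ^ 2) ^ a * (1 - 2 * (4 * a * ε / p)) := by gcongr
    _ = meanX G a + n ^ 2 * (p ^ 2) ^ a * (4 * a * ε / p ^ 2 + 2 * (4 * a * ε / p)) := by ring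
    _ ≤ meanX G a + n ^ 2 * (p ^ 2) ^ a * (4 * a * ε / p ^ 2 + 2 * (4 * a * ε / p ^ 2)) := by
        gcongr
    _ = _ := by ring

end Graph

theorem eventually_logb_div_rpow_le {r δ : ℝ} (hr : 0 < r) (hδ : 0 < δ) :
    ∀ᶠ n : ℕ in atTop, Real.logb 2 n / (n : ℝ) ^ r ≤ δ := by
  have hlim : Tendsto (fun x : ℝ => Real.logb 2 x / x ^ r) atTop (𝓝 0) := by
    simpa [Real.logb, div_right_comm] using
      (isLittleO_log_rpow_atTop hr).tendsto_div_nhds_zero.div_const (Real.log 2)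
  exact tendsto_natCast_atTop_atTop.eventually (hlim.eventually (eventually_le_nhds hδ))

theorem eventually_bounds_of_le_logb {p b : ℝ} (hp : 0 < p) (hb0 : 0 < b) (hb1 : b < 1) :
    ∀ᶠ n : ℕ in atTop, 0 < n ∧ ∀ a : ℕ, (a : ℝ) ≤ Real.logb 2 n →
      4 * a ≤ (n : ℝ) ^ (-b) * n ∧ 2 * (n : ℝ) ^ (-b) ≤ p ^ 2 ∧
        4 * a * (n : ℝ) ^ (-b) ≤ p ^ 2 := by
  have hsmall : ∀ᶠ n : ℕ in atTop, (n : ℝ) ^ (-b) ≤ p ^ 2 / 2 :=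
    tendsto_natCast_atTop_atTop.eventually
      ((tendsto_rpow_neg_atTop hb0).eventually (eventually_le_nhds (by positivity)))
  filter_upwards [eventually_gt_atTop 0, hsmall,
    eventually_logb_div_rpow_le (sub_pos.2 hb1) (show (0 : ℝ) < 1 / 4 by norm_num),
    eventually_logb_div_rpow_le hb0 (show 0 < p ^ 2 / 4 by positivity)] with n hn hε h1b hb
  have hn' : (0 : ℝ) < n := by exact_mod_cast hn
  refine ⟨hn, fun a ha => ⟨?_, by linarith, ?_⟩⟩
  · rw [div_le_iff₀ (by positivity)] at h1b
    calc 4 * (a : ℝ) ≤ (n : ℝ) ^ (1 - b) := by linarith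
      _ = (n : ℝ) ^ (-b) * n := by
        rw [sub_eq_neg_add, Real.rpow_add hn', Real.rpow_one]
  · rw [div_le_iff₀ (by positivity)] at hb
    rw [Real.rpow_neg hn'.le, ← div_eq_mul_inv, div_le_iff₀ (by positivity)]
    linarith

/-- In a pseudorandom graph, for `a ≤ c·log n`, the number `X_A` of vertices whose
neighborhood contains a uniformly random `a`-set `A` has mean `≈ n·p^a` and small variance. -/
theorem mean_var_supersetCount (p b : ℝ)
    (hp0 : 0 < p) (hp1 : p < 1) (hb0 : 0 < b) (hb1 : b < 1) :
    ∃ c C : ℝ, 0 < c ∧ 0 < C ∧ ∃ N₀ : ℕ, ∀ n ≥ N₀, ∀ G : SimpleGraph (Fin n),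
      (∀ v : Fin n, (p - (n : ℝ) ^ (-b)) * n ≤ ((G.neighborSet v).ncard : ℝ) ∧
        ((G.neighborSet v).ncard : ℝ) ≤ (p + (n : ℝ) ^ (-b)) * n) →
      (∀ u v : Fin n, u ≠ v →
        (p ^ 2 - (n : ℝ) ^ (-b)) * n ≤ ((G.neighborSet u ∩ G.neighborSet v).ncard : ℝ) ∧
        ((G.neighborSet u ∩ G.neighborSet v).ncard : ℝ) ≤ (p ^ 2 + (n : ℝ) ^ (-b)) * n) →
      ∀ a : ℕ, (a : ℝ) ≤ c * Real.logb 2 n →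
        |meanX G a - n * p ^ a| ≤ C * a * (n : ℝ) ^ (-b) * n * p ^ a ∧
        varX G a ≤ meanX G a + C * (n : ℝ) ^ ((2 : ℝ) - b) * p ^ (2 * a) * a := by
  obtain ⟨N₀, hN₀⟩ := eventually_atTop.1 (eventually_bounds_of_le_logb hp0 hb0 hb1)
  refine ⟨1, 12 / p ^ 2, one_pos, by positivity, N₀, fun n hn G hdeg hcodeg a ha => ?_⟩
  obtain ⟨hn0, hcond⟩ := hN₀ n hn
  obtain ⟨ha, hε, haε⟩ := hcond a (by linarith)
  have hp2p : p ^ 2 ≤ p := by nlinarith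
  have hdeg' v : |((G.neighborSet v).ncard : ℝ) - p * n| ≤ (n : ℝ) ^ (-b) * n :=
    abs_sub_le_iff.2 ⟨by linarith [(hdeg v).2], by linarith [(hdeg v).1]⟩
  have hcodeg' u v (huv : u ≠ v) :
      |((G.neighborSet u ∩ G.neighborSet v).ncard : ℝ) - p ^ 2 * n| ≤ (n : ℝ) ^ (-b) * n :=
    abs_sub_le_iff.2 ⟨by linarith [(hcodeg u v huv).2], by linarith [(hcodeg u v huv).1]⟩
  constructor
  · have hconst : 4 / p ≤ 12 / p ^ 2 := by
      rw [div_le_div_iff₀ hp0 (by positivity)]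
      nlinarith
    calc _ ≤ n * (4 * a * (n : ℝ) ^ (-b) / p * p ^ a) :=
          abs_meanX_sub_le hp0 hp1.le hdeg' ha (hε.trans hp2p) (haε.trans hp2p)
      _ = 4 / p * (a * (n : ℝ) ^ (-b) * n * p ^ a) := by ring
      _ ≤ 12 / p ^ 2 * (a * (n : ℝ) ^ (-b) * n * p ^ a) := by gcongr
      _ = _ := by ring
  · rw [sub_eq_add_neg, Real.rpow_add (by exact_mod_cast hn0), Real.rpow_two]
    exact varX_le hp0 hp1.le (by positivity) hdeg' hcodeg' ha hε haε
end

section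
/- Let G be a graph on n vertices with vertex set V, let 0 < p < 1 and δ > 0 be reals, and let S ⊆ V with |S| = s. Assume that for every subset A ⊆ S the number of vertices v ∈ V with A ⊆ N(v) lies between (1−δ)·n·p^{|A|} and (1+δ)·n·p^{|A|}. Then for every subset A ⊆ S, the number of vertices v ∈ V with N(v) ∩ S = A is at least n · p^{|A|} · ( (1−p)^{s−|A|} − δ·(1−p)^{−(s−|A|)} ). -/
/-!
By inclusion–exclusion over the supersets of `A` inside `S`, the number of vertices whose trace
on `S` is exactly `A` is the alternating sum `∑_{B ⊆ S \ A} (-1)^|B| · #{v | A ∪ B ⊆ N(v)}`.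
Each term is `n p^{|A|} p^{|B|}` up to an error `δ n p^{|A|} p^{|B|}`, so the main terms sum to
`n p^{|A|} (1 - p)^{s - |A|}` and the errors to at most `δ n p^{|A|} (1 + p)^{s - |A|}`,
which is at most `δ n p^{|A|} / (1 - p)^{s - |A|}` because `(1 + p)(1 - p) ≤ 1`.
-/

open Finset

theorem Set.ncard_setOf_eq_card_filter {α : Type*} [Fintype α] (P : α → Prop) [DecidablePred P] :
    {a | P a}.ncard = #{a | P a} := by
  rw [← coe_filter_univ, ncard_coe_finset]

theorem Finset.card_filter_inter_eq_eq_alternating_sum {ι α : Type*} [Fintype ι] [DecidableEq α]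
    (N : ι → Finset α) {S A : Finset α} (hA : A ⊆ S) :
    (#{i | N i ∩ S = A} : ℤ) = ∑ B ∈ (S \ A).powerset, (-1 : ℤ) ^ #B * #{i | A ∪ B ⊆ N i} := by
  classical
  have h := inclusion_exclusion_sum_inf_compl (S \ A) (fun x ↦ ({i | x ∈ N i} : Finset ι))
    (fun i ↦ if A ⊆ N i then (1 : ℤ) else 0)
  have h_exact : ((S \ A).inf fun x ↦ ({i | x ∈ N i} : Finset ι)ᶜ).filter (A ⊆ N ·) =
      ({i | N i ∩ S = A} : Finset ι) := by
    ext i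
    simp only [mem_filter, mem_univ, true_and, mem_inf, mem_compl, mem_sdiff]
    constructor
    · rintro ⟨h_out, h_in⟩
      ext x
      simp only [mem_inter]
      exact ⟨fun ⟨hxN, hxS⟩ ↦ by_contra fun hxA ↦ h_out x ⟨hxS, hxA⟩ hxN,
        fun hxA ↦ ⟨h_in hxA, hA hxA⟩⟩
    · rintro rfl
      exact ⟨fun x ⟨hxS, hxA⟩ hxN ↦ hxA (mem_inter.2 ⟨hxN, hxS⟩), inter_subset_left⟩
  have h_sup (B : Finset α) : (B.inf fun x ↦ ({i | x ∈ N i} : Finset ι)).filter (A ⊆ N ·) =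
      ({i | A ∪ B ⊆ N i} : Finset ι) := by
    ext i
    simp only [mem_filter, mem_univ, true_and, mem_inf, union_subset_iff]
    exact and_comm
  simpa only [sum_ite, sum_const_zero, add_zero, sum_const, nsmul_eq_mul, mul_one, smul_eq_mul,
    h_exact, h_sup] using h

theorem Finset.sum_powerset_pow_card {α R : Type*} [CommSemiring R] (x : R) (T : Finset α) :
    ∑ B ∈ T.powerset, x ^ #B = (x + 1) ^ #T := by
  simpa using sum_pow_mul_eq_add_pow x 1 T

theorem Finset.sub_le_sum_powerset_neg_one_pow_mul {α : Type*} (T : Finset α) (g : Finset α → ℝ)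
    {c ε p : ℝ} (hg : ∀ B ⊆ T, |g B - c * p ^ #B| ≤ ε * p ^ #B) :
    c * (1 - p) ^ #T - ε * (1 + p) ^ #T ≤ ∑ B ∈ T.powerset, (-1) ^ #B * g B := by
  have h_term : ∀ B ∈ T.powerset, c * (-p) ^ #B - ε * p ^ #B ≤ (-1) ^ #B * g B := by
    intro B hB
    have h_sign : (-1 : ℝ) ^ #B * (g B - c * p ^ #B) ≥ -(ε * p ^ #B) := by
      refine le_trans ?_ (neg_abs_le _)
      rw [abs_mul, abs_neg_one_pow, one_mul, neg_le_neg_iff]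
      exact hg B (mem_powerset.1 hB)
    rw [neg_pow]
    linarith
  calc c * (1 - p) ^ #T - ε * (1 + p) ^ #T
      = ∑ B ∈ T.powerset, (c * (-p) ^ #B - ε * p ^ #B) := by
        rw [sum_sub_distrib, ← mul_sum, ← mul_sum, sum_powerset_pow_card, sum_powerset_pow_card]
        ring
    _ ≤ ∑ B ∈ T.powerset, (-1) ^ #B * g B := sum_le_sum h_term

theorem one_add_pow_le_inv_one_sub_pow {p : ℝ} (hp₀ : -1 ≤ p) (hp₁ : p < 1) (k : ℕ) :
    (1 + p) ^ k ≤ ((1 - p) ^ k)⁻¹ := by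
  have h_pos : 0 < (1 - p) ^ k := pow_pos (by linarith) k
  rw [← one_div, le_div_iff₀ h_pos, ← mul_pow]
  exact pow_le_one₀ (by nlinarith) (by nlinarith [sq_nonneg p])

theorem exact_trace_count_lower_bound_general {V : Type*} [Fintype V] (G : SimpleGraph V)
    (n : ℕ) (p δ : ℝ) (hp0 : 0 < p) (hp1 : p < 1) (hδ : 0 < δ)
    (S : Finset V) (s : ℕ) (hs : S.card = s)
    (hyp : ∀ A ⊆ S,
      (1 - δ) * n * p ^ A.card ≤
        ({v : V | (A : Set V) ⊆ G.neighborSet v}.ncard : ℝ) ∧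
      ({v : V | (A : Set V) ⊆ G.neighborSet v}.ncard : ℝ) ≤
        (1 + δ) * n * p ^ A.card) :
    ∀ A ⊆ S,
      (n : ℝ) * p ^ A.card *
          ((1 - p) ^ (s - A.card) - δ / (1 - p) ^ (s - A.card)) ≤
        ({v : V | G.neighborSet v ∩ (S : Set V) = (A : Set V)}.ncard : ℝ) := by
  classical
  intro A hA
  have h_card : #(S \ A) = s - #A := by rw [card_sdiff_of_subset hA, hs]
  have h_sup (T : Finset V) :
      {v | (T : Set V) ⊆ G.neighborSet v}.ncard = #{v | T ⊆ G.neighborFinset v} := by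
    simp_rw [← SimpleGraph.coe_neighborFinset, coe_subset]
    exact Set.ncard_setOf_eq_card_filter _
  have h_exact : {v | G.neighborSet v ∩ S = A}.ncard = #{v | G.neighborFinset v ∩ S = A} := by
    simp_rw [← SimpleGraph.coe_neighborFinset, ← coe_inter, coe_inj]
    exact Set.ncard_setOf_eq_card_filter _
  have h_approx : ∀ B ⊆ S \ A, |(#{v | A ∪ B ⊆ G.neighborFinset v} : ℝ) - n * p ^ #A * p ^ #B|
      ≤ δ * n * p ^ #A * p ^ #B := by
    intro B hB
    have h_disj : Disjoint A B := disjoint_of_subset_right hB disjoint_sdiff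
    have h_bounds := hyp (A ∪ B) (union_subset hA (hB.trans sdiff_subset))
    rw [h_sup, card_union_of_disjoint h_disj, pow_add] at h_bounds
    rw [abs_sub_le_iff]
    constructor <;> linarith [h_bounds.1, h_bounds.2]
  have h_inv := one_add_pow_le_inv_one_sub_pow (by linarith) hp1 (s - #A)
  calc (n : ℝ) * p ^ #A * ((1 - p) ^ (s - #A) - δ / (1 - p) ^ (s - #A))
      ≤ n * p ^ #A * (1 - p) ^ (s - #A) - δ * n * p ^ #A * (1 + p) ^ (s - #A) := by
        rw [div_eq_mul_inv]
        linarith [mul_le_mul_of_nonneg_left h_inv (by positivity : (0 : ℝ) ≤ δ * n * p ^ #A)]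
    _ ≤ ∑ B ∈ (S \ A).powerset, (-1) ^ #B * (#{v | A ∪ B ⊆ G.neighborFinset v} : ℝ) := by
        simpa only [h_card] using sub_le_sum_powerset_neg_one_pow_mul (S \ A) _ h_approx
    _ = {v | G.neighborSet v ∩ S = A}.ncard := by
        rw [h_exact]
        exact_mod_cast (card_filter_inter_eq_eq_alternating_sum (G.neighborFinset ·) hA).symm

/-- If for every `A ⊆ S` the number of vertices whose neighborhood contains `A` is
`(1±δ)·n·p^{|A|}`, then for every `A ⊆ S` the number of vertices whose neighborhood meets `S`
exactly in `A` is at least `n·p^{|A|}·((1−p)^{s−|A|} − δ·(1−p)^{−(s−|A|)})`. -/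
theorem exact_trace_count_lower_bound {V : Type*} [Fintype V] (G : SimpleGraph V)
    (n : ℕ) (hn : Fintype.card V = n) (p δ : ℝ) (hp0 : 0 < p) (hp1 : p < 1) (hδ : 0 < δ)
    (S : Finset V) (s : ℕ) (hs : S.card = s)
    (hyp : ∀ A ⊆ S,
      (1 - δ) * n * p ^ A.card ≤
        ({v : V | (A : Set V) ⊆ G.neighborSet v}.ncard : ℝ) ∧
      ({v : V | (A : Set V) ⊆ G.neighborSet v}.ncard : ℝ) ≤
        (1 + δ) * n * p ^ A.card) :
    ∀ A ⊆ S,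
      (n : ℝ) * p ^ A.card *
          ((1 - p) ^ (s - A.card) - δ / (1 - p) ^ (s - A.card)) ≤
        ({v : V | G.neighborSet v ∩ (S : Set V) = (A : Set V)}.ncard : ℝ) :=
  exact_trace_count_lower_bound_general G n p δ hp0 hp1 hδ S s hs hyp
end

section
/- Let V be a finite set with |V| ≥ 3 and let S, T ⊆ V be disjoint subsets with |S| < |T|. Let G be the graph on vertex set V whose edge set consists of all pairs {x,y} with x ∈ S and y ∈ T, together with all pairs {x,y} with both x, y ∈ V ∖ S. Then G is Hamiltonian, i.e. G contains a cycle visiting every vertex of V exactly once. -/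
/-!
Write `T = {t₁, …, t_m}` and `S = {s₁, …, s_k}` with `k < m`, and arrange the vertices cyclically
as `t₁ s₁ t₂ s₂ … t_k s_k t_{k+1} … t_m` followed by the vertices outside `S ∪ T`. Each `sᵢ` sits
between `tᵢ` and `t_{i+1}` (this is where `k < m` is needed), and every other pair of cyclically
consecutive vertices, including the closing pair, consists of two distinct vertices outside `S`,
which are adjacent. Since `|V| ≥ 3`, this arrangement is a Hamilton cycle.
-/

namespace List

variable {α : Type*}

theorem Nodup.length_eq_card [Fintype α] [DecidableEq α] {l : List α} (hnd : l.Nodup)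
    (hmem : ∀ a, a ∈ l) : l.length = Fintype.card α := by
  rw [← toFinset_card_of_nodup hnd, Finset.eq_univ_of_forall fun a => mem_toFinset.2 (hmem a),
    Finset.card_univ]

theorem Nodup.ne_of_mem_getLast?_of_mem_head? {l : List α} (hnd : l.Nodup) (hl : 2 ≤ l.length)
    {x y : α} (hx : x ∈ l.getLast?) (hy : y ∈ l.head?) : x ≠ y := by
  obtain ⟨a, l, rfl⟩ := exists_cons_of_length_pos (by omega : 0 < l.length)
  have hne : l ≠ [] := ne_nil_of_length_pos (by simp at hl; omega)
  rw [getLast?_cons, getLast?_eq_some_getLast hne] at hx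
  rintro rfl
  simp only [head?_cons, Option.mem_def, Option.some.injEq] at hy hx
  exact (nodup_cons.1 hnd).1 (hy ▸ hx ▸ getLast_mem hne)

theorem isChain_interleave_append {R : α → α → Prop} :
    ∀ {l₁ l₂ : List α} (l₃ : List α), l₂.length < l₁.length →
      (∀ a ∈ l₁, ∀ b ∈ l₂, R a b ∧ R b a) → IsChain R (l₁.drop l₂.length ++ l₃) →
      IsChain R (l₁.interleave l₂ ++ l₃)
  | l₁, [], l₃, _, _, h => by simpa using h
  | a :: a' :: l₁, b :: l₂, l₃, hlen, hR, h => by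
    have ih := isChain_interleave_append (l₁ := a' :: l₁) (l₂ := l₂) l₃ (by simpa using hlen)
      (fun x hx y hy => hR x (mem_cons_of_mem _ hx) y (mem_cons_of_mem _ hy)) (by simpa using h)
    simp only [cons_interleave, cons_append] at ih ⊢
    exact isChain_cons_cons.2 ⟨(hR a (by simp) b (by simp)).1,
      isChain_cons_cons.2 ⟨(hR a' (by simp) b (by simp)).2, ih⟩⟩
  | [_], _ :: _, _, hlen, _, _ => by simp at hlen
  | [], _ :: _, _, hlen, _, _ => by simp at hlen

end List

namespace SimpleGraph

variable {V : Type*} [Fintype V] [DecidableEq V] {G : SimpleGraph V}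

theorem exists_isHamiltonianCycle_of_isChain {l : List V} (h3 : 3 ≤ Fintype.card V)
    (hnd : l.Nodup) (hmem : ∀ v, v ∈ l) (hchain : l.IsChain G.Adj)
    (hclose : ∀ x ∈ l.getLast?, ∀ y ∈ l.head?, G.Adj x y) :
    ∃ a, ∃ p : G.Walk a a, p.IsHamiltonianCycle := by
  have hlen := hnd.length_eq_card hmem
  obtain ⟨a, l, rfl⟩ := List.exists_cons_of_length_pos (by omega : 0 < l.length)
  let p : G.Walk a _ := Walk.ofSupport (a :: l) (List.cons_ne_nil a l) hchain
  have hsupp : p.support = a :: l := Walk.support_ofSupport _ _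
  have hp : p.IsPath := Walk.IsPath.mk' (by rw [hsupp]; exact hnd)
  have hlast : G.Adj a ((a :: l).getLast (List.cons_ne_nil a l)) :=
    (hclose _ (List.getLast_mem_getLast? _) a rfl).symm
  refine ⟨a, .cons hlast p.reverse,
    Walk.isHamiltonianCycle_iff_isCycle_and_support_count_tail_eq_one.2 ⟨?_, ?_⟩⟩
  · refine Walk.isCycle_iff_isPath_tail_and_le_length.2 ⟨by simpa using hp.reverse, ?_⟩
    have := congrArg List.length hsupp
    simp only [Walk.length_support, List.length_cons] at this hlen
    simp; omega
  · rw [Walk.support_cons, List.tail_cons]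
    exact hp.reverse.isHamiltonian_of_mem (by simpa [hsupp, or_comm] using hmem)

end SimpleGraph

namespace Finset

variable {V : Type*} [Fintype V] [DecidableEq V] {S T : Finset V}

noncomputable def alternatingOrder (S T : Finset V) : List V :=
  T.toList.interleave S.toList ++ (S ∪ T)ᶜ.toList

theorem nodup_alternatingOrder (hST : Disjoint S T) : (alternatingOrder S T).Nodup := by
  refine (List.interleave_perm_append.append_right _).nodup_iff.2 ?_
  simp only [List.nodup_append, nodup_toList, List.mem_append, mem_toList, true_and]
  refine ⟨?_, ?_⟩ <;> rintro a ha b hb rfl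
  · exact disjoint_left.1 hST hb ha
  · simp only [mem_compl, mem_union] at hb
    tauto

theorem mem_alternatingOrder (v : V) : v ∈ alternatingOrder S T := by
  refine (List.interleave_perm_append.append_right _).mem_iff.2 ?_
  simp only [List.mem_append, mem_toList, mem_compl, mem_union]
  tauto

theorem alternatingOrder_eq_append_drop (hcard : S.card ≤ T.card) :
    alternatingOrder S T = (T.toList.take S.card).interleave S.toList ++
      (T.toList.drop S.card ++ (S ∪ T)ᶜ.toList) := by
  rw [alternatingOrder, ← T.toList.take_append_drop S.card,
    List.interleave_append_left (by simpa using hcard), List.append_assoc, List.take_append_drop]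

theorem notMem_of_mem_drop_toList_append_toList_compl (hST : Disjoint S T) (k : ℕ) :
    ∀ v ∈ T.toList.drop k ++ (S ∪ T)ᶜ.toList, v ∉ S := by
  intro v hv hvS
  rcases List.mem_append.1 hv with hv | hv
  · exact disjoint_left.1 hST hvS (mem_toList.1 (List.mem_of_mem_drop hv))
  · simp only [mem_toList, mem_compl, mem_union] at hv
    exact hv (Or.inl hvS)

theorem isChain_alternatingOrder {G : SimpleGraph V} (hST : Disjoint S T)
    (hcard : S.card < T.card) (hTS : ∀ t ∈ T, ∀ s ∈ S, G.Adj t s)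
    (hSc : ∀ x y, x ∉ S → y ∉ S → x ≠ y → G.Adj x y) : (alternatingOrder S T).IsChain G.Adj := by
  have hnd := nodup_alternatingOrder hST
  rw [alternatingOrder_eq_append_drop hcard.le] at hnd
  have hM := notMem_of_mem_drop_toList_append_toList_compl hST S.card
  refine List.isChain_interleave_append _ (by simpa using hcard) (fun t ht s hs =>
    have hts := hTS t (mem_toList.1 ht) s (mem_toList.1 hs)
    ⟨hts, hts.symm⟩) ?_
  rw [length_toList]
  exact ((List.nodup_append.1 hnd).2.1.pairwise_of_forall_ne
    fun x hx y hy => hSc x y (hM x hx) (hM y hy)).isChain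

theorem adj_getLast_head_alternatingOrder {G : SimpleGraph V} (h2 : 2 ≤ Fintype.card V)
    (hST : Disjoint S T) (hcard : S.card < T.card)
    (hSc : ∀ x y, x ∉ S → y ∉ S → x ≠ y → G.Adj x y) :
    ∀ x ∈ (alternatingOrder S T).getLast?, ∀ y ∈ (alternatingOrder S T).head?, G.Adj x y := by
  intro x hx y hy
  have hnd := nodup_alternatingOrder hST
  have hxy := hnd.ne_of_mem_getLast?_of_mem_head?
    (by rw [hnd.length_eq_card mem_alternatingOrder]; exact h2) hx hy
  have hMne : T.toList.drop S.card ++ (S ∪ T)ᶜ.toList ≠ [] := by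
    simp [List.drop_eq_nil_iff, hcard]
  rw [alternatingOrder_eq_append_drop hcard.le, List.getLast?_append_of_ne_nil _ hMne] at hx
  obtain ⟨t, ts, htl⟩ := List.exists_cons_of_ne_nil <|
    List.ne_nil_of_length_pos (l := T.toList) (by simpa using S.card.zero_le.trans_lt hcard)
  have hyT : y ∈ T := by
    simp only [alternatingOrder, htl, List.cons_interleave, List.cons_append, List.head?_cons,
      Option.mem_def, Option.some.injEq] at hy
    exact mem_toList.1 (hy ▸ htl ▸ List.mem_cons_self)
  exact hSc x y (notMem_of_mem_drop_toList_append_toList_compl hST _ x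
    (List.mem_of_mem_getLast? hx)) (fun hyS => disjoint_left.1 hST hyS hyT) hxy

end Finset

/-- The auxiliary graph (complete bipartite between disjoint `S` and `T` plus a complete graph
on the complement of `S`) is Hamiltonian whenever `|S| < |T|` and `|V| ≥ 3`. -/
theorem auxiliary_graph_hamiltonian {V : Type*} [Fintype V] [DecidableEq V]
    (h3 : 3 ≤ Fintype.card V) (S T : Finset V) (hST : Disjoint S T)
    (hcard : S.card < T.card) (G : SimpleGraph V)
    (hG : ∀ x y : V, G.Adj x y ↔ x ≠ y ∧
      ((x ∈ S ∧ y ∈ T) ∨ (y ∈ S ∧ x ∈ T) ∨ (x ∉ S ∧ y ∉ S))) :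
    ∃ a : V, ∃ c : G.Walk a a, c.IsHamiltonianCycle := by
  have hTS : ∀ t ∈ T, ∀ s ∈ S, G.Adj t s := fun t ht s hs =>
    (hG t s).2 ⟨fun h => Finset.disjoint_left.1 hST hs (h ▸ ht), by tauto⟩
  have hSc : ∀ x y, x ∉ S → y ∉ S → x ≠ y → G.Adj x y := fun x y hx hy hne =>
    (hG x y).2 ⟨hne, by tauto⟩
  exact SimpleGraph.exists_isHamiltonianCycle_of_isChain h3
    (Finset.nodup_alternatingOrder hST) Finset.mem_alternatingOrder
    (Finset.isChain_alternatingOrder hST hcard hTS hSc)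
    (Finset.adj_getLast_head_alternatingOrder (by omega) hST hcard hSc)
end

section
/- Let G be a Hamiltonian graph on a finite vertex set V, and let S, T ⊆ V be disjoint sets such that S is an independent set in G and every neighbor of every vertex of S lies in T. Then |S| ≤ |T|; moreover, if additionally S ∪ T ≠ V and S is nonempty, then |S| < |T|. -/
/-!
Orient a Hamiltonian cycle. Sending each vertex of `S` to its predecessor on the cycle is an
injection into `T`, so `|S| ≤ |T|`. If it were onto `T`, then the successor of a vertex of `T`
would lie in `S` and the successor of a vertex of `S` in `T`, so the cycle could never leave
`S ∪ T`; as it meets `S` and visits every vertex, `S ∪ T` would be everything.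
-/

open Finset

namespace SimpleGraph.Walk

variable {V : Type*} {G : SimpleGraph V} {a : V} {c : G.Walk a a}

lemma IsCycle.injOn_fst_darts (hc : c.IsCycle) : {d | d ∈ c.darts}.InjOn (·.fst) :=
  List.inj_on_of_nodup_map (c.map_fst_darts ▸ hc.nodup_dropLast_support)

lemma IsCycle.injOn_snd_darts (hc : c.IsCycle) : {d | d ∈ c.darts}.InjOn (·.snd) :=
  List.inj_on_of_nodup_map (c.map_snd_darts ▸ hc.support_nodup)

lemma exists_mem_darts_fst_mem_snd_notMem (c : G.Walk a a) {A : Set V} {u v : V}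
    (hu : u ∈ c.support) (hv : v ∈ c.support) (huA : u ∈ A) (hvA : v ∉ A) :
    ∃ d ∈ c.darts, d.fst ∈ A ∧ d.snd ∉ A := by
  classical
  by_cases haA : a ∈ A
  · obtain ⟨d, hd, hdA⟩ := (c.takeUntil v hv).exists_boundary_dart A haA hvA
    exact ⟨d, c.darts_takeUntil_subset_darts hv hd, hdA⟩
  · obtain ⟨d, hd, hdA⟩ := (c.dropUntil u hu).exists_boundary_dart A huA haA
    exact ⟨d, c.darts_dropUntil_subset_darts hu hd, hdA⟩

variable [DecidableEq V]

lemma IsHamiltonianCycle.exists_mem_darts_snd_eq (hc : c.IsHamiltonianCycle) (v : V) :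
    ∃ d ∈ c.darts, d.snd = v := by
  have hv : v ∈ c.support.tail :=
    support_tail_of_not_nil c hc.not_nil ▸ hc.isHamiltonian_tail.mem_support v
  simpa [← map_snd_darts] using hv

lemma image_fst_filter_snd_mem_darts_subset {u v : V} (p : G.Walk u v) {S T : Finset V}
    (hST : ∀ x ∈ S, ∀ y, G.Adj x y → y ∈ T) :
    {d ∈ p.darts.toFinset | d.snd ∈ S}.image (·.fst) ⊆ T := by
  simp only [image_subset_iff, mem_filter, List.mem_toFinset]
  exact fun d ⟨_, hd⟩ ↦ hST _ hd _ d.adj.symm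

lemma IsHamiltonianCycle.card_image_fst_filter_snd_mem_darts (hc : c.IsHamiltonianCycle)
    (S : Finset V) : #({d ∈ c.darts.toFinset | d.snd ∈ S}.image (·.fst)) = #S := by
  have hE : ∀ d ∈ ({d ∈ c.darts.toFinset | d.snd ∈ S} : Finset G.Dart), d ∈ c.darts :=
    fun d hd ↦ List.mem_toFinset.1 (mem_filter.1 hd).1
  rw [card_image_of_injOn (hc.isCycle.injOn_fst_darts.mono hE)]
  refine card_nbij (·.snd) (fun d hd ↦ (mem_filter.1 hd).2)
    (hc.isCycle.injOn_snd_darts.mono hE) ?_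
  intro v hv
  obtain ⟨d, hd, rfl⟩ := hc.exists_mem_darts_snd_eq v
  exact ⟨d, by simpa [hd] using hv, rfl⟩

lemma IsHamiltonianCycle.card_le_card_of_forall_adj_mem (hc : c.IsHamiltonianCycle)
    {S T : Finset V} (hST : ∀ x ∈ S, ∀ y, G.Adj x y → y ∈ T) : #S ≤ #T :=
  hc.card_image_fst_filter_snd_mem_darts S ▸
    card_le_card (c.image_fst_filter_snd_mem_darts_subset hST)

lemma IsHamiltonianCycle.card_lt_card_of_forall_adj_mem [Fintype V] (hc : c.IsHamiltonianCycle)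
    {S T : Finset V} (hST : ∀ x ∈ S, ∀ y, G.Adj x y → y ∈ T) (hS : S.Nonempty)
    (hSTU : S ∪ T ≠ univ) : #S < #T := by
  obtain ⟨s, hs⟩ := hS
  obtain ⟨x, hx⟩ : ∃ x, x ∉ S ∪ T := by simpa [eq_univ_iff_forall] using hSTU
  obtain ⟨d, hd, hfst, hsnd⟩ := c.exists_mem_darts_fst_mem_snd_notMem (A := ↑(S ∪ T))
    (hc.mem_support s) (hc.mem_support x) (by simp [hs]) (by simpa using hx)
  simp only [coe_union, Set.mem_union, mem_coe, not_or] at hfst hsnd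
  have hfstT : d.fst ∈ T := hfst.resolve_left fun h ↦ hsnd.2 (hST _ h _ d.adj)
  have hfst_notMem : d.fst ∉ {d ∈ c.darts.toFinset | d.snd ∈ S}.image (·.fst) := by
    simp only [mem_image, mem_filter, List.mem_toFinset, not_exists, not_and, and_imp]
    intro d' hd' hd'S hfst'
    exact hsnd.1 (hc.isCycle.injOn_fst_darts hd' hd hfst' ▸ hd'S)
  rw [← hc.card_image_fst_filter_snd_mem_darts S]
  exact card_lt_card ((ssubset_iff_of_subset (c.image_fst_filter_snd_mem_darts_subset hST)).2
    ⟨_, hfstT, hfst_notMem⟩)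

end SimpleGraph.Walk

theorem hamiltonian_independent_set_bound_general {V : Type*} [Fintype V] [DecidableEq V]
    (G : SimpleGraph V) (hG : ∃ a : V, ∃ c : G.Walk a a, c.IsHamiltonianCycle)
    (S T : Finset V)
    (hnbr : ∀ v ∈ S, ∀ w : V, G.Adj v w → w ∈ T) :
    S.card ≤ T.card ∧
      ((S ∪ T ≠ Finset.univ ∧ S.Nonempty) → S.card < T.card) := by
  obtain ⟨a, c, hc⟩ := hG
  exact ⟨hc.card_le_card_of_forall_adj_mem hnbr,
    fun ⟨hSTU, hS⟩ ↦ hc.card_lt_card_of_forall_adj_mem hnbr hS hSTU⟩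

/-- In a Hamiltonian graph, if `S` is an independent set all of whose neighbors lie in a set `T`
disjoint from `S`, then `|S| ≤ |T|`; moreover `|S| < |T|` if additionally `S ∪ T ≠ V` and
`S ≠ ∅`. -/
theorem hamiltonian_independent_set_bound {V : Type*} [Fintype V] [DecidableEq V]
    (G : SimpleGraph V) (hG : ∃ a : V, ∃ c : G.Walk a a, c.IsHamiltonianCycle)
    (S T : Finset V) (hST : Disjoint S T)
    (hind : ∀ x ∈ S, ∀ y ∈ S, ¬ G.Adj x y)
    (hnbr : ∀ v ∈ S, ∀ w : V, G.Adj v w → w ∈ T) :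
    S.card ≤ T.card ∧
      ((S ∪ T ≠ Finset.univ ∧ S.Nonempty) → S.card < T.card) :=
  hamiltonian_independent_set_bound_general G hG S T hnbr
end
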